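/- arXiv:2309.11606 — 3 statements merged into one kernel-verified Lean document; each statement's English description precedes it below -/
import Mathlib

section
/- Let G be a connected cubic graph with a spanning tree T such that every component of the cotree G − E(T) has an even number of edges. Then the cotree edges can be partitioned into pairs of adjacent edges, and choosing one common vertex from each pair yields an independent set J of vertices, each of which is a leaf of T, such that T − J is a tree induced by V(G) − J. -/
open SimpleGraph Finset

/-- The set of edges of `H` lying in the connected component `c` of `H`. -/
def cotreeCompEdges {V : Type*} (H : SimpleGraph V) (c : H.ConnectedComponent) :
    Set (Sym2 V) :=
  {e | e ∈ H.edgeSet ∧ ∀ v ∈ e, H.connectedComponentMk v = c}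


namespace StmtAux

section Lists

def pairUp {β : Type*} : List β → List (β × β)
  | x :: y :: t => (x, y) :: pairUp t
  | _ => []

lemma pairUp_rel {β : Type*} {R : β → β → Prop} :
    ∀ (l : List β), l.Chain' R → ∀ z ∈ pairUp l, R z.1 z.2
  | [], _, z, hz => by simp [pairUp] at hz
  | [x], _, z, hz => by simp [pairUp] at hz
  | x :: y :: t, hc, z, hz => by
    rw [pairUp] at hz
    rcases List.mem_cons.1 hz with h | h
    · subst h; exact hc.rel_head
    · exact pairUp_rel t hc.tail.tail z h

lemma pairUp_mem {β : Type*} :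
    ∀ (l : List β), ∀ z ∈ pairUp l, z.1 ∈ l ∧ z.2 ∈ l
  | [], z, hz => by simp [pairUp] at hz
  | [x], z, hz => by simp [pairUp] at hz
  | x :: y :: t, z, hz => by
    rw [pairUp] at hz
    rcases List.mem_cons.1 hz with h | h
    · subst h; simp
    · have := pairUp_mem t z h
      exact ⟨List.mem_cons_of_mem _ (List.mem_cons_of_mem _ this.1),
        List.mem_cons_of_mem _ (List.mem_cons_of_mem _ this.2)⟩

lemma pairUp_cover {β : Type*} :
    ∀ (l : List β), Even l.length → ∀ x ∈ l, ∃ z ∈ pairUp l, x = z.1 ∨ x = z.2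
  | [], _, x, hx => by simp at hx
  | [a], he, x, hx => by simp at he
  | a :: b :: t, he, x, hx => by
    rw [pairUp]
    rcases List.mem_cons.1 hx with h | h
    · exact ⟨(a, b), List.mem_cons_self, Or.inl h⟩
    rcases List.mem_cons.1 h with h | h
    · exact ⟨(a, b), List.mem_cons_self, Or.inr h⟩
    · have he' : Even t.length := by
        rcases he with ⟨k, hk⟩
        simp only [List.length_cons] at hk
        exact ⟨k - 1, by omega⟩
      obtain ⟨z, hz, hxz⟩ := pairUp_cover t he' x h
      exact ⟨z, List.mem_cons_of_mem _ hz, hxz⟩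

lemma pairUp_nodup {β : Type*} :
    ∀ (l : List β), l.Nodup → ∀ z ∈ pairUp l, ∀ w ∈ pairUp l,
      z.1 ≠ z.2 ∧ (z ≠ w → z.1 ≠ w.1 ∧ z.1 ≠ w.2 ∧ z.2 ≠ w.1 ∧ z.2 ≠ w.2)
  | [], _, z, hz, w, hw => by simp [pairUp] at hz
  | [x], _, z, hz, w, hw => by simp [pairUp] at hz
  | x :: y :: t, hn, z, hz, w, hw => by
    rw [pairUp] at hz hw
    have hxy : x ∉ y :: t := (List.nodup_cons.1 hn).1
    have hyt : y ∉ t := (List.nodup_cons.1 (List.nodup_cons.1 hn).2).1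
    have htn : t.Nodup := (List.nodup_cons.1 (List.nodup_cons.1 hn).2).2
    have hxny : x ≠ y := fun h => hxy (h ▸ List.mem_cons_self)
    have hxt : x ∉ t := fun h => hxy (List.mem_cons_of_mem _ h)
    rcases List.mem_cons.1 hz with h1 | h1 <;> rcases List.mem_cons.1 hw with h2 | h2
    · subst h1; subst h2; exact ⟨hxny, fun h => absurd rfl h⟩
    · subst h1
      have hm := pairUp_mem t w h2
      exact ⟨hxny, fun _ => ⟨fun h => hxt ((show x = w.1 from h) ▸ hm.1),
        fun h => hxt ((show x = w.2 from h) ▸ hm.2),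
        fun h => hyt ((show y = w.1 from h) ▸ hm.1),
        fun h => hyt ((show y = w.2 from h) ▸ hm.2)⟩⟩
    · subst h2
      have hm := pairUp_mem t z h1
      have h1' := (pairUp_nodup t htn z h1 z h1).1
      exact ⟨h1', fun _ => ⟨fun h => hxt ((show z.1 = x from h) ▸ hm.1),
        fun h => hyt ((show z.1 = y from h) ▸ hm.1),
        fun h => hxt ((show z.2 = x from h) ▸ hm.2),
        fun h => hyt ((show z.2 = y from h) ▸ hm.2)⟩⟩
    · exact pairUp_nodup t htn z h1 w h2


end Lists

section HamPath

variable {α : Type*} [Fintype α] [DecidableEq α]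

lemma interior_two_nbrs {L : SimpleGraph α} :
    ∀ {a b : α} (p : L.Walk a b), p.IsPath → ∀ v ∈ p.support, v ≠ a → v ≠ b →
      ∃ x y, x ≠ y ∧ L.Adj v x ∧ L.Adj v y ∧ x ∈ p.support ∧ y ∈ p.support := by
  intro a b p
  induction p with
  | nil =>
    intro _ v hv hva _
    simp only [Walk.support_nil, List.mem_singleton] at hv
    exact absurd hv hva
  | @cons a c b h q ih =>
    intro hp v hv hva hvb
    have hq : q.IsPath := hp.of_cons
    have hansup : a ∉ q.support := ((Walk.cons_isPath_iff h q).1 hp).2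
    rw [Walk.support_cons, List.mem_cons] at hv
    rcases hv with h1 | h1
    · exact absurd h1 hva
    by_cases hvc : v = c
    · subst hvc
      cases q with
      | nil => exact absurd rfl hvb
      | @cons c d b h2 r =>
        refine ⟨a, d, ?_, h.symm, h2, ?_, ?_⟩
        · rintro rfl
          exact hansup (by simp [Walk.support_cons])
        · simp [Walk.support_cons]
        · simp [Walk.support_cons]
    · obtain ⟨x, y, hxy, hx, hy, hxs, hys⟩ := ih hq v h1 hvc hvb
      exact ⟨x, y, hxy, hx, hy, by simp [Walk.support_cons, hxs],
        by simp [Walk.support_cons, hys]⟩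

lemma exists_ham_path (L : SimpleGraph α) [DecidableRel L.Adj] (hc : L.Connected)
    (hdeg : ∀ v, L.degree v ≤ 2) :
    ∃ (a b : α) (p : L.Walk a b), p.IsPath ∧ ∀ v, v ∈ p.support := by
  classical
  obtain ⟨v₀⟩ := hc.nonempty
  set k := Fintype.card α with hk
  set Q : ℕ → Prop := fun n => ∃ (a b : α) (p : L.Walk a b), p.IsPath ∧ p.length = n with hQ
  have hQ0 : Q 0 := ⟨v₀, v₀, Walk.nil, Walk.IsPath.nil, rfl⟩
  set m := Nat.findGreatest Q k with hm
  have hQm : Q m := Nat.findGreatest_spec (Nat.zero_le k) hQ0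
  obtain ⟨a, b, p, hp, hlen⟩ := hQm
  refine ⟨a, b, p, hp, ?_⟩
  by_contra hcov
  push_neg at hcov
  obtain ⟨z0, hz0⟩ := hcov
  have hclosed : ¬ (∀ v ∈ p.support, ∀ z, L.Adj v z → z ∈ p.support) := by
    intro hcl
    have key : ∀ {x y : α} (q : L.Walk x y), x ∈ p.support → y ∈ p.support := by
      intro x y q
      induction q with
      | nil => exact id
      | cons h q ih => exact fun hx => ih (hcl _ hx _ h)
    exact hz0 (key ((hc.preconnected a z0).some) p.start_mem_support)
  push_neg at hclosed
  obtain ⟨v, hv, z, hvz, hzn⟩ := hclosed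
  have hext : ∀ {x y : α} (q : L.Walk x y), q.IsPath → q.length = m + 1 → False := by
    intro x y q hq hql
    have h1 : q.length ≤ k := le_of_lt hq.length_lt
    have h2 : Q q.length := ⟨x, y, q, hq, rfl⟩
    exact Nat.findGreatest_is_greatest (P := Q) (n := k) (by omega) (by omega) h2
  by_cases hva : v = a
  · subst hva
    exact hext (Walk.cons hvz.symm p)
      ((Walk.cons_isPath_iff _ _).2 ⟨hp, hzn⟩) (by simp [hlen])
  by_cases hvb : v = b
  · subst hvb
    refine hext (Walk.cons hvz.symm p.reverse)
      ((Walk.cons_isPath_iff _ _).2 ⟨hp.reverse, ?_⟩) (by simp [hlen])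
    simpa [Walk.support_reverse] using hzn
  · obtain ⟨x, y, hxy, hx, hy, hxs, hys⟩ := interior_two_nbrs p hp v hv hva hvb
    have hzx : z ≠ x := fun h => hzn (h ▸ hxs)
    have hzy : z ≠ y := fun h => hzn (h ▸ hys)
    have hsub : ({z, x, y} : Finset α) ⊆ L.neighborFinset v := by
      intro w hw
      simp only [Finset.mem_insert, Finset.mem_singleton] at hw
      rcases hw with rfl | rfl | rfl
      · exact (mem_neighborFinset _ _ _).2 hvz
      · exact (mem_neighborFinset _ _ _).2 hx
      · exact (mem_neighborFinset _ _ _).2 hy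
    have hcard : ({z, x, y} : Finset α).card = 3 := by
      rw [Finset.card_insert_of_notMem (by simp [hzx, hzy]),
        Finset.card_insert_of_notMem (by simp [hxy]), Finset.card_singleton]
    have := Finset.card_le_card hsub
    rw [hcard] at this
    have h4 : 3 ≤ L.degree v := by
      rw [← SimpleGraph.card_neighborFinset_eq_degree]; exact this
    exact absurd (hdeg v) (by omega)


end HamPath

section LineGraph

def lineG {V : Type*} (Cc : Finset (Sym2 V)) : SimpleGraph {e // e ∈ Cc} where
  Adj e f := e.1 ≠ f.1 ∧ ∃ v, v ∈ e.1 ∧ v ∈ f.1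
  symm := ⟨by rintro e f ⟨hne, v, hv1, hv2⟩; exact ⟨hne.symm, ⟨v, hv2, hv1⟩⟩⟩
  loopless := ⟨by rintro e ⟨hne, _⟩; exact hne rfl⟩

variable {V : Type*} [Fintype V] [DecidableEq V]


lemma lineG_connected (H : SimpleGraph V) (c : H.ConnectedComponent)
    (Cc : Finset (Sym2 V)) (hCc : ∀ e, e ∈ Cc ↔ e ∈ cotreeCompEdges H c)
    (hne : Cc.Nonempty) : (lineG Cc).Connected := by
  have step : ∀ (u x : V) (w : H.Walk u x), ∀ (e f : Sym2 V) (he : e ∈ Cc) (hf : f ∈ Cc),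
      u ∈ e → x ∈ f → (lineG Cc).Reachable ⟨e, he⟩ ⟨f, hf⟩ := by
    intro u x w
    induction w with
    | nil =>
      intro e f he hf hu hx
      by_cases hef : e = f
      · subst hef; rfl
      · exact SimpleGraph.Adj.reachable ⟨hef, _, hu, hx⟩
    | @cons u y x h w ih =>
      intro e f he hf hu hx
      have hg : s(u, y) ∈ Cc := by
        rw [hCc]
        refine ⟨h, ?_⟩
        intro v hv
        have hmu : H.connectedComponentMk u = c := ((hCc e).1 he).2 u hu
        rw [Sym2.mem_iff] at hv
        rcases hv with rfl | rfl
        · exact hmu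
        · rw [← hmu]; exact (SimpleGraph.ConnectedComponent.sound h.reachable).symm
      have h1 : (lineG Cc).Reachable ⟨e, he⟩ ⟨s(u, y), hg⟩ := by
        by_cases hef : e = s(u, y)
        · subst hef; rfl
        · exact SimpleGraph.Adj.reachable ⟨hef, u, hu, Sym2.mem_mk_left u y⟩
      exact h1.trans (ih _ _ hg hf (Sym2.mem_mk_right u y) hx)
  rw [SimpleGraph.connected_iff]
  constructor
  · rintro ⟨e, he⟩ ⟨f, hf⟩
    have heE : e ∈ H.edgeSet := ((hCc e).1 he).1
    have hfE : f ∈ H.edgeSet := ((hCc f).1 hf).1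
    induction e using Sym2.ind with
    | _ u v =>
    induction f using Sym2.ind with
    | _ x y =>
    have hr : H.Reachable u x := by
      apply SimpleGraph.ConnectedComponent.exact
      rw [((hCc _).1 he).2 u (Sym2.mem_mk_left u v), ((hCc _).1 hf).2 x (Sym2.mem_mk_left x y)]
    exact step u x hr.some _ _ he hf (Sym2.mem_mk_left u v) (Sym2.mem_mk_left x y)
  · obtain ⟨e, he⟩ := hne
    exact ⟨⟨e, he⟩⟩

lemma lineG_degree (H : SimpleGraph V) [DecidableRel H.Adj] (hdeg : ∀ v, H.degree v ≤ 2)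
    (Cc : Finset (Sym2 V)) (hCc : ∀ e, e ∈ Cc → e ∈ H.edgeSet)
    [DecidableRel (lineG Cc).Adj]
    (e : {e // e ∈ Cc}) : (lineG Cc).degree e ≤ 2 := by
  classical
  obtain ⟨e, he⟩ := e
  induction e using Sym2.ind with
  | _ u v =>
  have heE : s(u, v) ∈ H.edgeSet := hCc _ he
  have huv : H.Adj u v := heE
  have hsub : ((lineG Cc).neighborFinset ⟨s(u, v), he⟩).image Subtype.val ⊆
      ((H.incidenceFinset u).erase s(u, v)) ∪ ((H.incidenceFinset v).erase s(u, v)) := by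
    intro f hf
    simp only [Finset.mem_image] at hf
    obtain ⟨⟨f', hf'⟩, hmem, rfl⟩ := hf
    rw [SimpleGraph.mem_neighborFinset] at hmem
    obtain ⟨hne, w, hw1, hw2⟩ := hmem
    have hfE : f' ∈ H.edgeSet := hCc _ hf'
    rw [Sym2.mem_iff] at hw1
    simp only [Finset.mem_union, Finset.mem_erase, SimpleGraph.mem_incidenceFinset,
      SimpleGraph.mk'_mem_incidenceSet_iff]
    rcases hw1 with rfl | rfl
    · exact Or.inl ⟨fun h => hne h.symm, ⟨hfE, hw2⟩⟩
    · exact Or.inr ⟨fun h => hne h.symm, ⟨hfE, hw2⟩⟩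
  have hcard1 : ((H.incidenceFinset u).erase s(u, v)).card ≤ 1 := by
    have hin : s(u, v) ∈ H.incidenceFinset u := by
      rw [SimpleGraph.mem_incidenceFinset]
      exact ⟨heE, Sym2.mem_mk_left u v⟩
    rw [Finset.card_erase_of_mem hin, SimpleGraph.card_incidenceFinset_eq_degree]
    have := hdeg u; omega
  have hcard2 : ((H.incidenceFinset v).erase s(u, v)).card ≤ 1 := by
    have hin : s(u, v) ∈ H.incidenceFinset v := by
      rw [SimpleGraph.mem_incidenceFinset]
      exact ⟨heE, Sym2.mem_mk_right u v⟩
    rw [Finset.card_erase_of_mem hin, SimpleGraph.card_incidenceFinset_eq_degree]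
    have := hdeg v; omega
  have h1 := Finset.card_le_card hsub
  have h2 := Finset.card_union_le ((H.incidenceFinset u).erase s(u, v))
    ((H.incidenceFinset v).erase s(u, v))
  rw [Finset.card_image_of_injective _ Subtype.val_injective] at h1
  rw [← SimpleGraph.card_neighborFinset_eq_degree]
  omega


lemma key_comp (H : SimpleGraph V) [DecidableRel H.Adj] (hdeg : ∀ v, H.degree v ≤ 2)
    (c : H.ConnectedComponent) (heven : Even ((cotreeCompEdges H c).ncard)) :
    ∃ Pc : Finset (Finset (Sym2 V)),
      (∀ p ∈ Pc, p.card = 2 ∧ (↑p : Set (Sym2 V)) ⊆ cotreeCompEdges H c ∧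
        ∃ v : V, ∀ e ∈ p, v ∈ e) ∧
      (∀ p ∈ Pc, ∀ q ∈ Pc, p ≠ q → Disjoint p q) ∧
      (∀ e ∈ cotreeCompEdges H c, ∃ p ∈ Pc, e ∈ p) := by
  classical
  have hfin : (cotreeCompEdges H c).Finite := Set.toFinite _
  set Cc := hfin.toFinset with hCcdef
  have hCc : ∀ e, e ∈ Cc ↔ e ∈ cotreeCompEdges H c := fun e => Set.Finite.mem_toFinset _
  by_cases hne : Cc.Nonempty
  · have hconn := lineG_connected H c Cc hCc hne
    have hdegL : ∀ e, (lineG Cc).degree e ≤ 2 :=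
      lineG_degree H hdeg Cc (fun e he => ((hCc e).1 he).1)
    obtain ⟨a, b, p, hp, hcov⟩ := exists_ham_path (lineG Cc) hconn hdegL
    set l : List (Sym2 V) := p.support.map Subtype.val with hl
    have hnodup : l.Nodup := (hp.support_nodup).map Subtype.val_injective
    have hchain : List.Chain' (fun e f => ∃ v, v ∈ e ∧ v ∈ f) l :=
      List.isChain_map_of_isChain Subtype.val (fun a b hab => hab.2) p.isChain_adj_support
    have hmemCc : ∀ e ∈ l, e ∈ Cc := by
      intro e he
      rw [hl, List.mem_map] at he
      obtain ⟨⟨e', he'⟩, _, rfl⟩ := he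
      exact he'
    have hcovl : ∀ e ∈ Cc, e ∈ l := by
      intro e he
      rw [hl, List.mem_map]
      exact ⟨⟨e, he⟩, hcov _, rfl⟩
    have hlenl : Even l.length := by
      have h1 : l.length = p.support.length := by rw [hl, List.length_map]
      have h2 : p.support.toFinset = (Finset.univ : Finset {e // e ∈ Cc}) := by
        ext x; simp [hcov]
      have h3 : p.support.toFinset.card = p.support.length :=
        List.toFinset_card_of_nodup hp.support_nodup
      have h4 : (Finset.univ : Finset {e // e ∈ Cc}).card = Cc.card := by
        rw [Finset.card_univ, Fintype.card_coe]
      have h5 : (cotreeCompEdges H c).ncard = Cc.card := Set.ncard_eq_toFinset_card _ hfin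
      rw [h1, ← h3, h2, h4]
      rw [h5] at heven
      exact heven
    refine ⟨((pairUp l).map (fun z => ({z.1, z.2} : Finset (Sym2 V)))).toFinset, ?_, ?_, ?_⟩
    · intro q hq
      rw [List.mem_toFinset, List.mem_map] at hq
      obtain ⟨z, hz, rfl⟩ := hq
      have hzne : z.1 ≠ z.2 := (pairUp_nodup l hnodup z hz z hz).1
      have hzm := pairUp_mem l z hz
      refine ⟨?_, ?_, ?_⟩
      · rw [Finset.card_insert_of_notMem (by simp [hzne]), Finset.card_singleton]
      · intro e he
        simp only [Finset.coe_insert, Set.mem_insert_iff, Finset.coe_singleton,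
          Set.mem_singleton_iff] at he
        rcases he with rfl | rfl
        · exact (hCc _).1 (hmemCc _ hzm.1)
        · exact (hCc _).1 (hmemCc _ hzm.2)
      · obtain ⟨v, hv1, hv2⟩ := pairUp_rel l hchain z hz
        refine ⟨v, ?_⟩
        intro e he
        rcases Finset.mem_insert.1 he with rfl | he
        · exact hv1
        · rw [Finset.mem_singleton] at he; subst he; exact hv2
    · intro q hq r hr hqr
      rw [List.mem_toFinset, List.mem_map] at hq hr
      obtain ⟨z, hz, rfl⟩ := hq
      obtain ⟨w, hw, rfl⟩ := hr
      have hzw : z ≠ w := by rintro rfl; exact hqr rfl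
      obtain ⟨_, hd⟩ := pairUp_nodup l hnodup z hz w hw
      obtain ⟨h1, h2, h3, h4⟩ := hd hzw
      rw [Finset.disjoint_left]
      intro e he1 he2
      rcases Finset.mem_insert.1 he1 with rfl | he1 <;>
        [skip; (rw [Finset.mem_singleton] at he1; subst he1)] <;>
      rcases Finset.mem_insert.1 he2 with h | h <;>
        first
          | exact h1 h | exact h2 (Finset.mem_singleton.1 h)
          | exact h3 h | exact h4 (Finset.mem_singleton.1 h)
    · intro e he
      have hel : e ∈ l := hcovl e ((hCc e).2 he)
      obtain ⟨z, hz, hze⟩ := pairUp_cover l hlenl e hel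
      refine ⟨{z.1, z.2}, ?_, ?_⟩
      · rw [List.mem_toFinset, List.mem_map]; exact ⟨z, hz, rfl⟩
      · rcases hze with rfl | rfl
        · exact Finset.mem_insert_self _ _
        · exact Finset.mem_insert_of_mem (Finset.mem_singleton_self _)
  · refine ⟨∅, by simp, by simp, ?_⟩
    intro e he
    exact absurd ⟨e, (hCc e).2 he⟩ hne

end LineGraph

end StmtAux

open StmtAux

/-- If a connected cubic graph `G` has a spanning tree `T` all of whose cotree components
are even, then the cotree edges can be partitioned into pairs of adjacent edges, and any
set `J` obtained by choosing one common vertex from each pair is independent, consists of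
leaves of `T`, and `G` induces a tree on `V − J` (namely `T − J`). -/
theorem stmt17 {V : Type*} [Fintype V] [DecidableEq V] (G : SimpleGraph V)
    [DecidableRel G.Adj] (hconn : G.Connected) (hcubic : ∀ v, G.degree v = 3)
    (T : SimpleGraph V) [DecidableRel T.Adj] (hTG : T ≤ G) (hT : T.IsTree)
    (heven : ∀ c : (G \ T).ConnectedComponent,
      Even ((cotreeCompEdges (G \ T) c).ncard)) :
    ∃ P : Finset (Finset (Sym2 V)),
      (∀ p ∈ P, p.card = 2 ∧ (↑p : Set (Sym2 V)) ⊆ (G \ T).edgeSet ∧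
        ∃ v : V, ∀ e ∈ p, v ∈ e) ∧
      (∀ p ∈ P, ∀ q ∈ P, p ≠ q → Disjoint p q) ∧
      (↑(P.biUnion id) : Set (Sym2 V)) = (G \ T).edgeSet ∧
      ∀ J : Finset V,
        (∀ v ∈ J, ∃ p ∈ P, ∀ e ∈ p, v ∈ e) →
        (∀ p ∈ P, ∃! v, v ∈ J ∧ ∀ e ∈ p, v ∈ e) →
        (∀ u ∈ J, ∀ v ∈ J, ¬ G.Adj u v) ∧
        (∀ v ∈ J, T.degree v = 1) ∧
        (G.induce ((↑J : Set V)ᶜ)).IsTree := by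
  classical
  have hne : Nonempty V := hconn.nonempty
  obtain ⟨v₀⟩ := hne
  -- basic cardinality
  have hVcard : 4 ≤ Fintype.card V := by
    have h1 : insert v₀ (G.neighborFinset v₀) ⊆ Finset.univ := Finset.subset_univ _
    have h2 : (insert v₀ (G.neighborFinset v₀)).card = 4 := by
      rw [Finset.card_insert_of_notMem (by simp), G.card_neighborFinset_eq_degree, hcubic]
    calc 4 = (insert v₀ (G.neighborFinset v₀)).card := h2.symm
      _ ≤ Finset.univ.card := Finset.card_le_card h1
      _ = Fintype.card V := Finset.card_univ
  -- T has positive degree everywhere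
  have hTdeg : ∀ v, 1 ≤ T.degree v := by
    intro v
    obtain ⟨w, hw⟩ := Fintype.exists_ne_of_one_lt_card (by omega) v
    obtain ⟨q⟩ := hT.isConnected.preconnected v w
    cases q with
    | nil => exact absurd rfl hw
    | cons h _ => exact (SimpleGraph.degree_pos_iff_exists_adj _ _).2 ⟨_, h⟩
  -- degree arithmetic
  have hnfT : ∀ v, T.neighborFinset v ⊆ G.neighborFinset v := by
    intro v w hw
    rw [SimpleGraph.mem_neighborFinset] at *
    exact hTG hw
  have hnfH : ∀ v, (G \ T).neighborFinset v = G.neighborFinset v \ T.neighborFinset v := by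
    intro v
    ext w
    simp [SimpleGraph.mem_neighborFinset, SimpleGraph.sdiff_adj]
  have hdegsum : ∀ v, (G \ T).degree v + T.degree v = 3 := by
    intro v
    rw [← SimpleGraph.card_neighborFinset_eq_degree, ← SimpleGraph.card_neighborFinset_eq_degree,
      hnfH, Finset.card_sdiff_of_subset (hnfT v)]
    have h3 : (G.neighborFinset v).card = 3 := by
      rw [SimpleGraph.card_neighborFinset_eq_degree]; exact hcubic v
    have h4 := Finset.card_le_card (hnfT v)
    omega
  have hHdeg : ∀ v, (G \ T).degree v ≤ 2 := by
    intro v; have := hdegsum v; have := hTdeg v; omega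
  -- per-component pairings
  have hkey := fun c => key_comp (G \ T) hHdeg c (heven c)
  choose Pc hPc1 hPc2 hPc3 using hkey
  haveI : Fintype (G \ T).ConnectedComponent := Fintype.ofFinite _
  set P : Finset (Finset (Sym2 V)) := Finset.univ.biUnion Pc with hPdef
  have hmemP : ∀ p, p ∈ P ↔ ∃ c, p ∈ Pc c := by
    intro p
    simp [hPdef, Finset.mem_biUnion]
  have hA : ∀ p ∈ P, p.card = 2 ∧ (↑p : Set (Sym2 V)) ⊆ (G \ T).edgeSet ∧
      ∃ v : V, ∀ e ∈ p, v ∈ e := by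
    intro p hp
    obtain ⟨c, hpc⟩ := (hmemP p).1 hp
    obtain ⟨h1, h2, h3⟩ := hPc1 c p hpc
    exact ⟨h1, fun e he => (h2 he).1, h3⟩
  have hB : ∀ p ∈ P, ∀ q ∈ P, p ≠ q → Disjoint p q := by
    intro p hp q hq hpq
    obtain ⟨c, hpc⟩ := (hmemP p).1 hp
    obtain ⟨d, hqd⟩ := (hmemP q).1 hq
    by_cases hcd : c = d
    · subst hcd; exact hPc2 c p hpc q hqd hpq
    · rw [Finset.disjoint_left]
      intro e hep heq
      have h1 : e ∈ cotreeCompEdges (G \ T) c := (hPc1 c p hpc).2.1 hep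
      have h2 : e ∈ cotreeCompEdges (G \ T) d := (hPc1 d q hqd).2.1 heq
      induction e using Sym2.ind with
      | _ u v =>
        exact hcd (((h1.2 u (Sym2.mem_mk_left u v)).symm.trans
          (h2.2 u (Sym2.mem_mk_left u v))))
  have hC : (↑(P.biUnion id) : Set (Sym2 V)) = (G \ T).edgeSet := by
    ext e
    simp only [Finset.coe_biUnion, Finset.mem_coe, Set.mem_iUnion, id]
    constructor
    · rintro ⟨p, hp, hep⟩
      exact (hA p hp).2.1 hep
    · intro he
      induction e using Sym2.ind with
      | _ u v =>
        have hadj : (G \ T).Adj u v := he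
        have hcot : s(u, v) ∈ cotreeCompEdges (G \ T) ((G \ T).connectedComponentMk u) := by
          refine ⟨he, ?_⟩
          intro w hw
          rw [Sym2.mem_iff] at hw
          rcases hw with rfl | rfl
          · rfl
          · exact (SimpleGraph.ConnectedComponent.sound hadj.reachable).symm
        obtain ⟨p, hpc, hep⟩ := hPc3 _ _ hcot
        exact ⟨p, (hmemP p).2 ⟨_, hpc⟩, hep⟩
  refine ⟨P, hA, hB, hC, ?_⟩
  intro J hJ1 hJ2
  have hleaf : ∀ v ∈ J, T.degree v = 1 := by
    intro v hv
    obtain ⟨p, hpP, hvp⟩ := hJ1 v hv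
    obtain ⟨hcard, hsub, _⟩ := hA p hpP
    obtain ⟨e1, e2, hne12, rfl⟩ := Finset.card_eq_two.1 hcard
    have h1 : ({e1, e2} : Finset (Sym2 V)) ⊆ (G \ T).incidenceFinset v := by
      intro f hf
      rw [SimpleGraph.mem_incidenceFinset]
      exact ⟨hsub hf, hvp f hf⟩
    have h2 : 2 ≤ (G \ T).degree v := by
      calc 2 = ({e1, e2} : Finset (Sym2 V)).card := by
            rw [Finset.card_insert_of_notMem (by simp [hne12]), Finset.card_singleton]
        _ ≤ ((G \ T).incidenceFinset v).card := Finset.card_le_card h1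
        _ = (G \ T).degree v := SimpleGraph.card_incidenceFinset_eq_degree _ _
    have := hdegsum v; have := hTdeg v; omega
  -- the pair of a J-vertex consists exactly of its cotree edges
  have hpair_eq : ∀ v ∈ J, ∀ p ∈ P, (∀ e ∈ p, v ∈ e) →
      p = (G \ T).incidenceFinset v := by
    intro v hv p hpP hvp
    obtain ⟨hcard, hsub, _⟩ := hA p hpP
    have hps : p ⊆ (G \ T).incidenceFinset v := by
      intro f hf
      rw [SimpleGraph.mem_incidenceFinset]
      exact ⟨hsub hf, hvp f hf⟩
    have hdv : (G \ T).degree v = 2 := by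
      have := hleaf v hv; have := hdegsum v; omega
    apply Finset.eq_of_subset_of_card_le hps
    rw [SimpleGraph.card_incidenceFinset_eq_degree, hdv, hcard]
  have hindep : ∀ u ∈ J, ∀ v ∈ J, ¬ G.Adj u v := by
    intro u hu v hv hadj
    have hnbr : ∀ z ∈ J, ∀ x, T.Adj z x → T.neighborFinset z = {x} := by
      intro z hz x hzx
      have hone : (T.neighborFinset z).card = 1 := by
        rw [SimpleGraph.card_neighborFinset_eq_degree]; exact hleaf z hz
      obtain ⟨a, ha⟩ := Finset.card_eq_one.1 hone
      have hx' : x ∈ T.neighborFinset z := (SimpleGraph.mem_neighborFinset _ _ _).2 hzx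
      rw [ha, Finset.mem_singleton] at hx'
      rw [ha, hx']
    by_cases hT' : T.Adj u v
    · obtain ⟨w, hwu, hwv⟩ : ∃ w, w ≠ u ∧ w ≠ v := by
        by_contra hcon
        push_neg at hcon
        have hsub2 : (Finset.univ : Finset V) ⊆ {u, v} := by
          intro x _
          rcases eq_or_ne x u with rfl | hxu
          · exact Finset.mem_insert_self _ _
          · rw [hcon x hxu]
            exact Finset.mem_insert_of_mem (Finset.mem_singleton_self _)
        have := Finset.card_le_card hsub2
        have h2 : ({u, v} : Finset V).card ≤ 2 := Finset.card_insert_le _ _ |>.trans (by simp)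
        rw [Finset.card_univ] at this
        omega
      obtain ⟨q0⟩ := hT.isConnected.preconnected u w
      obtain ⟨q1, hq1⟩ := q0.toPath
      cases q1 with
      | nil => exact hwu rfl
      | @cons _ x _ h r =>
        have hx : x = v := by
          have := (SimpleGraph.mem_neighborFinset T u x).2 h
          rw [hnbr u hu v hT', Finset.mem_singleton] at this
          exact this
        cases r with
        | nil => exact hwv hx
        | @cons _ y _ h2 r2 =>
          have h2' : T.Adj v y := hx ▸ h2
          have hy : y = u := by
            have h3 := (SimpleGraph.mem_neighborFinset T v y).2 h2'
            rw [hnbr v hv u hT'.symm, Finset.mem_singleton] at h3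
            exact h3
          have h4 := ((SimpleGraph.Walk.cons_isPath_iff _ _).1 hq1).2
          refine h4 ?_
          rw [SimpleGraph.Walk.support_cons]
          refine List.mem_cons_of_mem _ ?_
          rw [← hy]
          exact r2.start_mem_support
    · have hH' : (G \ T).Adj u v := by rw [SimpleGraph.sdiff_adj]; exact ⟨hadj, hT'⟩
      obtain ⟨pu, hpuP, hupu⟩ := hJ1 u hu
      obtain ⟨pv, hpvP, hvpv⟩ := hJ1 v hv
      have hepu : s(u, v) ∈ pu := by
        rw [hpair_eq u hu pu hpuP hupu, SimpleGraph.mem_incidenceFinset]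
        exact ⟨hH', Sym2.mem_mk_left u v⟩
      have hepv : s(u, v) ∈ pv := by
        rw [hpair_eq v hv pv hpvP hvpv, SimpleGraph.mem_incidenceFinset]
        exact ⟨hH', Sym2.mem_mk_right u v⟩
      have hpuv : pu = pv := by
        by_contra hne'
        exact (Finset.disjoint_left.1 (hB pu hpuP pv hpvP hne')) hepu hepv
      subst hpuv
      obtain ⟨z, _, hzuniq⟩ := hJ2 pu hpuP
      have h1 : u = z := hzuniq u ⟨hu, hupu⟩
      have h2 : v = z := hzuniq v ⟨hv, hvpv⟩
      rw [h1.trans h2.symm] at hadj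
      exact hadj.ne rfl
  refine ⟨hindep, hleaf, ?_⟩
  -- the induced graph on the complement of J
  have hGT : ∀ a b : V, a ∉ J → b ∉ J → G.Adj a b → T.Adj a b := by
    intro a b ha hb hab
    by_contra hT'
    have hH' : (G \ T).Adj a b := by rw [SimpleGraph.sdiff_adj]; exact ⟨hab, hT'⟩
    have he : s(a, b) ∈ (↑(P.biUnion id) : Set (Sym2 V)) := by
      rw [hC]; exact hH'
    rw [Finset.mem_coe, Finset.mem_biUnion] at he
    obtain ⟨p, hpP, hep⟩ := he
    obtain ⟨z, ⟨hzJ, hz2⟩, _⟩ := hJ2 p hpP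
    have hze := hz2 _ hep
    rw [Sym2.mem_iff] at hze
    rcases hze with rfl | rfl
    · exact ha hzJ
    · exact hb hzJ
  have hnotJ_mem : ∀ x : V, x ∉ J ↔ (x ∈ ((↑J : Set V)ᶜ)) := by
    intro x
    simp [Set.mem_compl_iff]
  have hJcne : ∃ w : V, w ∉ J := by
    by_cases hv₀ : v₀ ∈ J
    · have h1 := hleaf v₀ hv₀
      have hone : (T.neighborFinset v₀).card = 1 := by
        rw [SimpleGraph.card_neighborFinset_eq_degree]; exact h1
      obtain ⟨a, ha⟩ := Finset.card_eq_one.1 hone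
      have haT : T.Adj v₀ a := by
        have : a ∈ T.neighborFinset v₀ := by rw [ha]; exact Finset.mem_singleton_self _
        exact (SimpleGraph.mem_neighborFinset _ _ _).1 this
      refine ⟨a, fun haJ => ?_⟩
      exact hindep v₀ hv₀ a haJ (hTG haT)
    · exact ⟨v₀, hv₀⟩
  have hlift : ∀ (a b : V) (w : T.Walk a b), (∀ x ∈ w.support, x ∉ J) →
      ∀ (ha : a ∈ ((↑J : Set V)ᶜ)) (hb : b ∈ ((↑J : Set V)ᶜ)),
      (G.induce ((↑J : Set V)ᶜ)).Reachable ⟨a, ha⟩ ⟨b, hb⟩ := by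
    intro a b w
    induction w with
    | nil => intro _ ha hb; rfl
    | @cons a x b h r ih =>
      intro hs ha hb
      have hx : x ∉ J := hs x (by
        rw [SimpleGraph.Walk.support_cons]
        exact List.mem_cons_of_mem _ r.start_mem_support)
      have hx' : x ∈ ((↑J : Set V)ᶜ) := (hnotJ_mem x).1 hx
      refine SimpleGraph.Reachable.trans (SimpleGraph.Adj.reachable ?_)
        (ih (fun y hy => hs y (by
          rw [SimpleGraph.Walk.support_cons]
          exact List.mem_cons_of_mem _ hy)) hx' hb)
      exact hTG h
  have hconn' : (G.induce ((↑J : Set V)ᶜ)).Connected := by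
    rw [SimpleGraph.connected_iff]
    constructor
    · rintro ⟨a, ha⟩ ⟨b, hb⟩
      obtain ⟨q0⟩ := hT.isConnected.preconnected a b
      obtain ⟨q1, hq1⟩ := q0.toPath
      refine hlift a b q1 ?_ ha hb
      intro x hx
      by_cases hxa : x = a
      · subst hxa; exact ((hnotJ_mem x).2 ha)
      by_cases hxb : x = b
      · subst hxb; exact ((hnotJ_mem x).2 hb)
      obtain ⟨s, t, hst, hadj1, hadj2, _, _⟩ :=
        StmtAux.interior_two_nbrs q1 hq1 x hx hxa hxb
      intro hxJ
      have hsub3 : ({s, t} : Finset V) ⊆ T.neighborFinset x := by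
        intro y hy
        rcases Finset.mem_insert.1 hy with rfl | hy
        · exact (SimpleGraph.mem_neighborFinset _ _ _).2 hadj1
        · rw [Finset.mem_singleton] at hy; subst hy
          exact (SimpleGraph.mem_neighborFinset _ _ _).2 hadj2
      have hcard3 : ({s, t} : Finset V).card = 2 := by
        rw [Finset.card_insert_of_notMem (by simp [hst]), Finset.card_singleton]
      have := Finset.card_le_card hsub3
      rw [hcard3, SimpleGraph.card_neighborFinset_eq_degree] at this
      rw [hleaf x hxJ] at this
      omega
    · obtain ⟨w, hw⟩ := hJcne
      exact ⟨⟨w, (hnotJ_mem w).1 hw⟩⟩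
  have hac : (G.induce ((↑J : Set V)ᶜ)).IsAcyclic := by
    intro x c hc
    have hhom : ∀ {a b : ((↑J : Set V)ᶜ : Set V)},
        (G.induce ((↑J : Set V)ᶜ)).Adj a b → T.Adj a.1 b.1 := by
      rintro ⟨a, ha⟩ ⟨b, hb⟩ hab
      exact hGT a b ((hnotJ_mem a).2 ha) ((hnotJ_mem b).2 hb) hab
    let φ : (G.induce ((↑J : Set V)ᶜ)) →g T := ⟨Subtype.val, fun h => hhom h⟩
    have hinj : Function.Injective φ := Subtype.val_injective
    exact hT.IsAcyclic (c.map φ)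
      ((SimpleGraph.Walk.map_isCycle_iff_of_injective hinj).2 hc)
  exact ⟨hconn', hac⟩
end

section
/- Let G be a 3-connected cubic graph which is odd-cyclically 4-connected, and suppose G = K * L is a 3-sum of cubic graphs K and L. Then both K and L have even Betti number, and both are odd-cyclically 4-connected. -/
open SimpleGraph Finset

/-- The edge cut `δ_G(A)`: edges of `G` with exactly one end in `A`. -/
def cutEdges {V : Type*} (G : SimpleGraph V) (A : Set V) : Set (Sym2 V) :=
  {f | ∃ x y, f = s(x, y) ∧ G.Adj x y ∧ x ∈ A ∧ y ∉ A}

/-- The Betti number `|E| − |V| + 1` of the subgraph of `G` induced by `A`. -/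
noncomputable def inducedBetti {V : Type*} (G : SimpleGraph V) (A : Set V) : ℤ :=
  ({f | f ∈ G.edgeSet ∧ ∀ v ∈ f, v ∈ A}.ncard : ℤ) - (A.ncard : ℤ) + 1

/-- `G` is odd-cyclically 4-connected: every induced subgraph `G[A]` whose edge cut is
cycle-separating (both sides contain a cycle) and whose Betti number is odd has
`|δ_G(A)| ≥ 4`. -/
def OddCyc4Conn {V : Type*} (G : SimpleGraph V) : Prop :=
  ∀ A : Set V, ¬ (G.induce A).IsAcyclic → ¬ (G.induce Aᶜ).IsAcyclic →
    Odd (inducedBetti G A) → 4 ≤ (cutEdges G A).ncard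

/-- `G` is 3-connected: at least 4 vertices and removing any ≤ 2 vertices leaves a
connected graph. -/
def ThreeConnected {V : Type*} [Fintype V] (G : SimpleGraph V) : Prop :=
  4 ≤ Fintype.card V ∧ ∀ S : Set V, S.ncard ≤ 2 → (G.induce Sᶜ).Connected

lemma not_isAcyclic_of_two_neighbors {W : Type*} [Fintype W] [DecidableEq W] (H : SimpleGraph W)
    (hne : Nonempty W)
    (hdeg : ∀ w : W, ∃ x y, x ≠ y ∧ H.Adj w x ∧ H.Adj w y) : ¬ H.IsAcyclic := by
  intro hac
  have key : ∀ n : ℕ, ∃ (u v : W) (p : H.Walk u v), p.IsPath ∧ p.length = n := by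
    intro n
    induction n with
    | zero => exact ⟨hne.some, hne.some, .nil, by simp, rfl⟩
    | succ n ih =>
      obtain ⟨u, v, p, hp, hlen⟩ := ih
      obtain ⟨x, y, hxy, hux, huy⟩ := hdeg u
      by_cases hx : x ∈ p.support
      · by_cases hy : y ∈ p.support
        · exfalso
          cases p with
          | nil =>
            simp only [SimpleGraph.Walk.support_nil, List.mem_singleton] at hx
            exact H.irrefl (hx ▸ hux)
          | @cons _ s _ h' p' =>
            set P := SimpleGraph.Walk.cons h' p' with hP
            have hz : ∃ z, z ≠ u ∧ z ≠ s ∧ z ∈ P.support ∧ H.Adj u z := by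
              by_cases hxs : x = s
              · exact ⟨y, fun h => H.irrefl (h ▸ huy), fun h => hxy (hxs.trans h.symm), hy, huy⟩
              · exact ⟨x, fun h => H.irrefl (h ▸ hux), hxs, hx, hux⟩
            obtain ⟨z, hzu, hzs, hzsup, huz⟩ := hz
            have hedge : s(u, z) ∉ P.edges := by
              intro hmem
              rw [hP, SimpleGraph.Walk.edges_cons, List.mem_cons] at hmem
              rcases hmem with h1 | h2
              · rw [Sym2.eq_iff] at h1
                rcases h1 with ⟨-, h1⟩ | ⟨h1, -⟩
                · exact hzs h1
                · exact H.irrefl (h1 ▸ h')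
              · have := SimpleGraph.Walk.fst_mem_support_of_mem_edges p' h2
                rw [hP, SimpleGraph.Walk.cons_isPath_iff] at hp
                exact hp.2 this
            have hq : (P.takeUntil z hzsup).IsPath := hp.takeUntil hzsup
            have hcyc : (SimpleGraph.Walk.cons huz.symm (P.takeUntil z hzsup)).IsCycle := by
              rw [SimpleGraph.Walk.cons_isCycle_iff]
              refine ⟨hq, fun hmem => hedge ?_⟩
              have := SimpleGraph.Walk.edges_takeUntil_subset P hzsup hmem
              rwa [Sym2.eq_swap] at this
            exact hac _ hcyc
        · exact ⟨y, v, .cons huy.symm p, hp.cons hy, by simp [hlen]⟩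
      · exact ⟨x, v, .cons hux.symm p, hp.cons hx, by simp [hlen]⟩
  obtain ⟨u, v, p, hp, hlen⟩ := key (Fintype.card W)
  exact absurd hp.length_lt (by omega)

lemma not_acyclic_transfer {α β : Type*} {H : SimpleGraph α} {G : SimpleGraph β}
    {S : Set α} {T : Set β} (f : α → β) (hinj : Set.InjOn f S)
    (hmap : ∀ x ∈ S, f x ∈ T)
    (hadj : ∀ x ∈ S, ∀ y ∈ S, H.Adj x y → G.Adj (f x) (f y))
    (h : ¬ (H.induce S).IsAcyclic) : ¬ (G.induce T).IsAcyclic := by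
  intro hac
  apply h
  intro w c hc
  let g : (H.induce S) →g (G.induce T) :=
    ⟨fun x => ⟨f x.1, hmap x.1 x.2⟩, by
      intro a b hab
      simp only [comap_adj, Function.Embedding.coe_subtype] at hab ⊢
      exact hadj a.1 a.2 b.1 b.2 hab⟩
  have ginj : Function.Injective g := by
    intro a b hab
    have : f a.1 = f b.1 := congrArg Subtype.val hab
    exact Subtype.ext (hinj a.2 b.2 this)
  exact hac _ (hc.map ginj)


lemma deg3_two_neighbors {W : Type*} [Fintype W] [DecidableEq W] (H : SimpleGraph W)
    [DecidableRel H.Adj] (v : W) (h3 : ∀ w, H.degree w = 3) (w : W) :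
    ∃ x y, x ≠ y ∧ x ≠ v ∧ y ≠ v ∧ H.Adj w x ∧ H.Adj w y := by
  have hcard : 1 < (H.neighborFinset w \ {v}).card := by
    have h1 : (H.neighborFinset w).card = 3 := h3 w
    have h2 : (H.neighborFinset w).card ≤ (H.neighborFinset w \ {v}).card + ({v} : Finset W).card :=
      Finset.card_le_card_sdiff_add_card
    simp only [Finset.card_singleton] at h2
    omega
  rw [Finset.one_lt_card] at hcard
  obtain ⟨x, hx, y, hy, hxy⟩ := hcard
  simp only [Finset.mem_sdiff, SimpleGraph.mem_neighborFinset, Finset.mem_singleton] at hx hy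
  exact ⟨x, y, hxy, hx.2, hy.2, hx.1, hy.1⟩

lemma cubic_del_vertex_cycle {W : Type*} [Fintype W] [DecidableEq W] (H : SimpleGraph W)
    [DecidableRel H.Adj] (v : W) (h3 : ∀ w, H.degree w = 3) :
    ¬ (H.induce {w | w ≠ v}).IsAcyclic := by
  have hne : Nonempty ↥{w | w ≠ v} := by
    obtain ⟨x, y, hxy, hxv, hyv, hx, hy⟩ := deg3_two_neighbors H v h3 v
    exact ⟨⟨x, hxv⟩⟩
  have : Fintype ↥{w | w ≠ v} := Fintype.ofFinite _
  have : DecidableEq ↥{w | w ≠ v} := fun a b => decEq a b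
  apply not_isAcyclic_of_two_neighbors _ hne
  rintro ⟨w, hw⟩
  obtain ⟨x, y, hxy, hxv, hyv, hx, hy⟩ := deg3_two_neighbors H v h3 w
  refine ⟨⟨x, hxv⟩, ⟨y, hyv⟩, fun h => hxy (congrArg Subtype.val h), ?_, ?_⟩ <;>
    simp [comap_adj, hx, hy]


lemma master {V₁ V₂ V : Type*} [Fintype V₁] [Fintype V₂] [Fintype V]
    [DecidableEq V₁] [DecidableEq V₂]
    (K : SimpleGraph V₁) (L : SimpleGraph V₂) [DecidableRel K.Adj] [DecidableRel L.Adj]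
    (v₁ : V₁) (v₂ : V₂) (hK : ∀ v, K.degree v = 3) (hL : ∀ v, L.degree v = 3)
    (φ : V₁ → V₂) (hφ : Set.BijOn φ (K.neighborSet v₁) (L.neighborSet v₂))
    (G : SimpleGraph V)
    (eqv : ({a : V₁ // a ≠ v₁} ⊕ {b : V₂ // b ≠ v₂}) ≃ V)
    (hll : ∀ a a', G.Adj (eqv (.inl a)) (eqv (.inl a')) ↔ K.Adj a.1 a'.1)
    (hrr : ∀ b b', G.Adj (eqv (.inr b)) (eqv (.inr b')) ↔ L.Adj b.1 b'.1)
    (hlr : ∀ a b, G.Adj (eqv (.inl a)) (eqv (.inr b)) ↔ (K.Adj v₁ a.1 ∧ φ a.1 = b.1))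
    (hGodd : OddCyc4Conn G) :
    Even ((K.edgeFinset.card : ℤ) - Fintype.card V₁ + 1) ∧
      (Even ((L.edgeFinset.card : ℤ) - Fintype.card V₂ + 1) → OddCyc4Conn K) := by
  classical
  -- neighbors
  obtain ⟨n₁, hn₁⟩ : ∃ a, K.Adj v₁ a := by
    have : 0 < (K.neighborFinset v₁).card := by rw [K.card_neighborFinset_eq_degree, hK]; norm_num
    obtain ⟨a, ha⟩ := Finset.card_pos.mp this
    exact ⟨a, (K.mem_neighborFinset v₁ a).mp ha⟩
  obtain ⟨n₂, hn₂⟩ : ∃ b, L.Adj v₂ b := by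
    have : 0 < (L.neighborFinset v₂).card := by rw [L.card_neighborFinset_eq_degree, hL]; norm_num
    obtain ⟨b, hb⟩ := Finset.card_pos.mp this
    exact ⟨b, (L.mem_neighborFinset v₂ b).mp hb⟩
  -- basic equiv facts
  have hne_lr : ∀ (a : {a : V₁ // a ≠ v₁}) (b : {b : V₂ // b ≠ v₂}),
      eqv (.inl a) ≠ eqv (.inr b) := fun a b h => by simpa using eqv.injective h
  have hinl_inj : ∀ (a a' : {a : V₁ // a ≠ v₁}), eqv (.inl a) = eqv (.inl a') → a.1 = a'.1 :=
    fun a a' h => congrArg Subtype.val (Sum.inl.injEq a a' ▸ eqv.injective h :)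
  have hinr_inj : ∀ (b b' : {b : V₂ // b ≠ v₂}), eqv (.inr b) = eqv (.inr b') → b.1 = b'.1 :=
    fun b b' h => congrArg Subtype.val (Sum.inr.injEq b b' ▸ eqv.injective h :)
  have hcover : ∀ u : V, (∃ a, u = eqv (.inl a)) ∨ (∃ b, u = eqv (.inr b)) := by
    intro u
    rcases h : eqv.symm u with a | b
    · exact Or.inl ⟨a, by rw [← h, eqv.apply_symm_apply]⟩
    · exact Or.inr ⟨b, by rw [← h, eqv.apply_symm_apply]⟩
  -- vertex maps
  obtain ⟨ψ, hψ, hψv⟩ : ∃ ψ : V₁ → V, (∀ (x : V₁) (h : x ≠ v₁), ψ x = eqv (.inl ⟨x, h⟩)) ∧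
      (∃ b, ψ v₁ = eqv (.inr b)) :=
    ⟨fun x => dite (x = v₁) (fun _ => eqv (.inr ⟨n₂, hn₂.ne'⟩)) (fun h => eqv (.inl ⟨x, h⟩)),
      fun x h => dif_neg h, ⟨_, dif_pos rfl⟩⟩
  obtain ⟨ψ₂, hψ₂, hψ₂v⟩ : ∃ ψ₂ : V₂ → V, (∀ (y : V₂) (h : y ≠ v₂), ψ₂ y = eqv (.inr ⟨y, h⟩)) ∧
      (∃ a, ψ₂ v₂ = eqv (.inl a)) :=
    ⟨fun y => dite (y = v₂) (fun _ => eqv (.inl ⟨n₁, hn₁.ne'⟩)) (fun h => eqv (.inr ⟨y, h⟩)),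
      fun y h => dif_neg h, ⟨_, dif_pos rfl⟩⟩
  obtain ⟨ρ, hρ⟩ : ∃ ρ : V₁ → V, ∀ (a : V₁) (h : φ a ≠ v₂), ρ a = eqv (.inr ⟨φ a, h⟩) :=
    ⟨fun a => dite (φ a = v₂) (fun _ => eqv (.inl ⟨n₁, hn₁.ne'⟩)) (fun h => eqv (.inr ⟨φ a, h⟩)),
      fun a h => dif_neg h⟩
  have hφv : ∀ a, K.Adj v₁ a → φ a ≠ v₂ := fun a ha => (hφ.mapsTo ha).ne'
  have hψinj : Function.Injective ψ := by
    intro x x' h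
    by_cases hx : x = v₁ <;> by_cases hx' : x' = v₁
    · rw [hx, hx']
    · exfalso; subst hx; obtain ⟨b, hb⟩ := hψv
      rw [hb, hψ x' hx'] at h; exact hne_lr _ _ h.symm
    · exfalso; subst hx'; obtain ⟨b, hb⟩ := hψv
      rw [hb, hψ x hx] at h; exact hne_lr _ _ h
    · rw [hψ x hx, hψ x' hx'] at h; exact hinl_inj _ _ h
  have hψ₂inj : Function.Injective ψ₂ := by
    intro y y' h
    by_cases hy : y = v₂ <;> by_cases hy' : y' = v₂
    · rw [hy, hy']
    · exfalso; subst hy; obtain ⟨a, ha⟩ := hψ₂v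
      rw [ha, hψ₂ y' hy'] at h; exact hne_lr _ _ h
    · exfalso; subst hy'; obtain ⟨a, ha⟩ := hψ₂v
      rw [ha, hψ₂ y hy] at h; exact hne_lr _ _ h.symm
    · rw [hψ₂ y hy, hψ₂ y' hy'] at h; exact hinr_inj _ _ h
  -- edge map
  obtain ⟨F, hF1, hF2⟩ : ∃ F : Sym2 V₁ → Sym2 V,
      (∀ y, F s(v₁, y) = s(ψ y, ρ y)) ∧
      (∀ x y, x ≠ v₁ → y ≠ v₁ → F s(x, y) = s(ψ x, ψ y)) := by
    refine ⟨Sym2.lift ⟨fun x y =>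
      if x = v₁ then s(ψ y, ρ y) else if y = v₁ then s(ψ x, ρ x) else s(ψ x, ψ y), ?_⟩, ?_, ?_⟩
    · intro x y
      by_cases hx : x = v₁ <;> by_cases hy : y = v₁
      · subst hx; subst hy; simp
      · simp only [if_pos hx, if_neg hy]
      · simp only [if_pos hy, if_neg hx]
      · simp only [if_neg hx, if_neg hy, Sym2.eq_swap]
    · intro y; rw [Sym2.lift_mk]; simp
    · intro x y hx hy; rw [Sym2.lift_mk]; simp [hx, hy]
  have hF1' : ∀ x, x ≠ v₁ → F s(x, v₁) = s(ψ x, ρ x) := by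
    intro x hx; rw [Sym2.eq_swap, hF1 x]
  -- retraction
  obtain ⟨r, hrl, hrr'⟩ : ∃ r : V → V₁,
      (∀ a, r (eqv (.inl a)) = a.1) ∧ (∀ b, r (eqv (.inr b)) = v₁) :=
    ⟨fun u => Sum.elim (fun a => a.1) (fun _ => v₁) (eqv.symm u), by simp, by simp⟩
  have hrψ : ∀ (x : V₁), x ≠ v₁ → r (ψ x) = x := by
    intro x hx; rw [hψ x hx, hrl]
  have hrρ : ∀ (a : V₁), φ a ≠ v₂ → r (ρ a) = v₁ := by
    intro a ha; rw [hρ a ha, hrr']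
  have hleft : ∀ e ∈ K.edgeSet, Sym2.map r (F e) = e := by
    intro e he
    induction e with
    | _ x y =>
      rw [SimpleGraph.mem_edgeSet] at he
      by_cases hx : x = v₁
      · subst hx
        rw [hF1 y, Sym2.map_pair_eq, hrψ y he.ne', hrρ y (hφv y he), Sym2.eq_swap]
      · by_cases hy : y = v₁
        · subst hy
          rw [hF1' x hx, Sym2.map_pair_eq, hrψ x hx, hrρ x (hφv x he.symm)]
        · rw [hF2 x y hx hy, Sym2.map_pair_eq, hrψ x hx, hrψ y hy]
  have hFinj : Set.InjOn F K.edgeSet := by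
    intro e he e' he' h
    rw [← hleft e he, ← hleft e' he', h]
  -- the lifted vertex set
  obtain ⟨A', hA'l, hA'r⟩ : ∃ A' : Set V₁ → Set V,
      (∀ (A : Set V₁) (a : {a : V₁ // a ≠ v₁}), eqv (.inl a) ∈ A' A ↔ a.1 ∈ A) ∧
      (∀ (A : Set V₁) (b : {b : V₂ // b ≠ v₂}), eqv (.inr b) ∈ A' A ↔ v₁ ∈ A) :=
    ⟨fun A => {u | Sum.elim (fun a => a.1 ∈ A) (fun _ => v₁ ∈ A) (eqv.symm u)},
      fun A a => by simp [Set.mem_setOf_eq], fun A b => by simp [Set.mem_setOf_eq]⟩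
  -- cut correspondence
  have hcutEq : ∀ A : Set V₁, cutEdges G (A' A) = F '' cutEdges K A := by
    intro A
    apply Set.eq_of_subset_of_subset
    · rintro w ⟨u, u', rfl, hadj, hu, hu'⟩
      rcases hcover u with ⟨a, rfl⟩ | ⟨b, rfl⟩
      · rcases hcover u' with ⟨a', rfl⟩ | ⟨b', rfl⟩
        · have hadjK : K.Adj a.1 a'.1 := (hll a a').mp hadj
          refine ⟨s(a.1, a'.1), ⟨a.1, a'.1, rfl, hadjK, (hA'l A a).mp hu,
            fun hmem => hu' ((hA'l A a').mpr hmem)⟩, ?_⟩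
          rw [hF2 a.1 a'.1 a.2 a'.2, hψ a.1 a.2, hψ a'.1 a'.2]
        · obtain ⟨hK1, hK2⟩ := (hlr a b').mp hadj
          have hvA : v₁ ∉ A := fun hmem => hu' ((hA'r A b').mpr hmem)
          refine ⟨s(a.1, v₁), ⟨a.1, v₁, rfl, hK1.symm, (hA'l A a).mp hu, hvA⟩, ?_⟩
          rw [hF1' a.1 a.2, hψ a.1 a.2, hρ a.1 (hφv a.1 hK1)]
          have hb : (⟨φ a.1, hφv a.1 hK1⟩ : {b : V₂ // b ≠ v₂}) = b' := Subtype.ext hK2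
          rw [hb]
      · rcases hcover u' with ⟨a', rfl⟩ | ⟨b', rfl⟩
        · obtain ⟨hK1, hK2⟩ := (hlr a' b).mp hadj.symm
          have hvA : v₁ ∈ A := (hA'r A b).mp hu
          have haA : a'.1 ∉ A := fun hmem => hu' ((hA'l A a').mpr hmem)
          refine ⟨s(v₁, a'.1), ⟨v₁, a'.1, rfl, hK1, hvA, haA⟩, ?_⟩
          rw [hF1 a'.1, hψ a'.1 a'.2, hρ a'.1 (hφv a'.1 hK1)]
          have hb : (⟨φ a'.1, hφv a'.1 hK1⟩ : {b : V₂ // b ≠ v₂}) = b := Subtype.ext hK2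
          rw [hb, Sym2.eq_swap]
        · exact absurd ((hA'r A b').mpr ((hA'r A b).mp hu)) hu'
    · rintro w ⟨e, ⟨x, y, rfl, hadj, hx, hy⟩, rfl⟩
      by_cases hxv : x = v₁
      · rw [hxv] at hadj hx ⊢
        have hyv : y ≠ v₁ := hadj.ne'
        refine ⟨eqv (.inr ⟨φ y, hφv y hadj⟩), eqv (.inl ⟨y, hyv⟩), ?_, ?_, ?_, ?_⟩
        · rw [hF1 y, hρ y (hφv y hadj), hψ y hyv, Sym2.eq_swap]
        · exact ((hlr ⟨y, hyv⟩ ⟨φ y, hφv y hadj⟩).mpr ⟨hadj, rfl⟩).symm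
        · exact (hA'r A _).mpr hx
        · intro hmem; exact hy ((hA'l A _).mp hmem)
      · by_cases hyv : y = v₁
        · subst hyv
          refine ⟨eqv (.inl ⟨x, hxv⟩), eqv (.inr ⟨φ x, hφv x hadj.symm⟩), ?_, ?_, ?_, ?_⟩
          · rw [hF1' x hxv, hψ x hxv, hρ x (hφv x hadj.symm)]
          · exact (hlr _ _).mpr ⟨hadj.symm, rfl⟩
          · exact (hA'l A _).mpr hx
          · intro hmem; exact hy ((hA'r A _).mp hmem)
        · refine ⟨eqv (.inl ⟨x, hxv⟩), eqv (.inl ⟨y, hyv⟩), ?_, ?_, ?_, ?_⟩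
          · rw [hF2 x y hxv hyv, hψ x hxv, hψ y hyv]
          · exact (hll _ _).mpr hadj
          · exact (hA'l A _).mpr hx
          · intro hmem; exact hy ((hA'l A _).mp hmem)
  have hcutsub : ∀ A : Set V₁, cutEdges K A ⊆ K.edgeSet := by
    rintro A e ⟨x, y, rfl, hadj, -, -⟩; exact hadj
  have hcut : ∀ A : Set V₁, (cutEdges G (A' A)).ncard = (cutEdges K A).ncard := by
    intro A; rw [hcutEq A, Set.ncard_image_of_injOn (hFinj.mono (hcutsub A))]
  -- edge counts
  have hT3 : ({f | f ∈ L.edgeSet ∧ v₂ ∉ f}).ncard + 3 = L.edgeFinset.card := by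
    have hset : {f | f ∈ L.edgeSet ∧ v₂ ∉ f} = ↑(L.edgeFinset.filter (fun e => ¬ v₂ ∈ e)) := by
      ext e; simp [SimpleGraph.mem_edgeFinset]
    rw [hset, Set.ncard_coe_finset]
    have h1 := Finset.card_filter_add_card_filter_not (s := L.edgeFinset)
      (p := fun e => v₂ ∈ e)
    rw [← L.incidenceFinset_eq_filter v₂, SimpleGraph.card_incidenceFinset_eq_degree, hL] at h1
    omega
  have hT3K : ({f | f ∈ K.edgeSet ∧ v₁ ∉ f}).ncard + 3 = K.edgeFinset.card := by
    have hset : {f | f ∈ K.edgeSet ∧ v₁ ∉ f} = ↑(K.edgeFinset.filter (fun e => ¬ v₁ ∈ e)) := by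
      ext e; simp [SimpleGraph.mem_edgeFinset]
    rw [hset, Set.ncard_coe_finset]
    have h1 := Finset.card_filter_add_card_filter_not (s := K.edgeFinset)
      (p := fun e => v₁ ∈ e)
    rw [← K.incidenceFinset_eq_filter v₁, SimpleGraph.card_incidenceFinset_eq_degree, hK] at h1
    omega
  -- Betti correspondence, v₁ ∉ A
  have hNeq₁ : ∀ A : Set V₁, v₁ ∉ A →
      {f | f ∈ G.edgeSet ∧ ∀ v ∈ f, v ∈ A' A}
        = Sym2.map ψ '' {f | f ∈ K.edgeSet ∧ ∀ v ∈ f, v ∈ A} := by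
    intro A hvA
    apply Set.eq_of_subset_of_subset
    · intro w hw
      induction w with
      | _ u u' =>
        obtain ⟨hadj, hall⟩ := hw
        rw [SimpleGraph.mem_edgeSet] at hadj
        have hu : u ∈ A' A := hall u (Sym2.mem_mk_left u u')
        have hu' : u' ∈ A' A := hall u' (Sym2.mem_mk_right u u')
        rcases hcover u with ⟨a, rfl⟩ | ⟨b, rfl⟩
        · rcases hcover u' with ⟨a', rfl⟩ | ⟨b', rfl⟩
          · refine ⟨s(a.1, a'.1), ⟨(hll a a').mp hadj, ?_⟩, ?_⟩
            · intro v hv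
              rcases Sym2.mem_iff.mp hv with h | h
              · exact h ▸ (hA'l A a).mp hu
              · exact h ▸ (hA'l A a').mp hu'
            · rw [Sym2.map_pair_eq, hψ a.1 a.2, hψ a'.1 a'.2]
          · exact absurd ((hA'r A b').mp hu') hvA
        · exact absurd ((hA'r A b).mp hu) hvA
    · rintro w ⟨e, ⟨he, hall⟩, rfl⟩
      induction e with
      | _ x y =>
        rw [SimpleGraph.mem_edgeSet] at he
        have hxA : x ∈ A := hall x (Sym2.mem_mk_left x y)
        have hyA : y ∈ A := hall y (Sym2.mem_mk_right x y)
        have hxv : x ≠ v₁ := fun h => hvA (h ▸ hxA)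
        have hyv : y ≠ v₁ := fun h => hvA (h ▸ hyA)
        rw [Sym2.map_pair_eq, hψ x hxv, hψ y hyv]
        refine ⟨(hll _ _).mpr he, ?_⟩
        intro v hv
        rcases Sym2.mem_iff.mp hv with h | h
        · exact h ▸ (hA'l A ⟨x, hxv⟩).mpr hxA
        · exact h ▸ (hA'l A ⟨y, hyv⟩).mpr hyA
  have hA'set : ∀ A : Set V₁, v₁ ∉ A → A' A = ψ '' A := by
    intro A hvA
    apply Set.eq_of_subset_of_subset
    · intro u hu
      rcases hcover u with ⟨a, rfl⟩ | ⟨b, rfl⟩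
      · exact ⟨a.1, (hA'l A a).mp hu, by rw [hψ a.1 a.2]⟩
      · exact absurd ((hA'r A b).mp hu) hvA
    · rintro u ⟨x, hx, rfl⟩
      have hxv : x ≠ v₁ := fun h => hvA (h ▸ hx)
      rw [hψ x hxv]
      exact (hA'l A ⟨x, hxv⟩).mpr hx
  have hbetti₁ : ∀ A : Set V₁, v₁ ∉ A → inducedBetti G (A' A) = inducedBetti K A := by
    intro A hvA
    unfold inducedBetti
    rw [hNeq₁ A hvA, hA'set A hvA,
      Set.ncard_image_of_injOn ((Sym2.map.injective hψinj).injOn),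
      Set.ncard_image_of_injOn (hψinj.injOn)]
  -- Betti correspondence, v₁ ∈ A
  have hbetti₂pre : ∀ A : Set V₁, v₁ ∈ A →
      ({f | f ∈ G.edgeSet ∧ ∀ v ∈ f, v ∈ A' A}).ncard =
        ({f | f ∈ K.edgeSet ∧ ∀ v ∈ f, v ∈ A}).ncard
          + ({f | f ∈ L.edgeSet ∧ v₂ ∉ f}).ncard := by
    intro A hvA
    have hsplit : {f | f ∈ G.edgeSet ∧ ∀ v ∈ f, v ∈ A' A}
        = (Sym2.map ψ '' {f | f ∈ K.edgeSet ∧ (∀ v ∈ f, v ∈ A) ∧ v₁ ∉ f}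
            ∪ (fun a => s(ψ a, ρ a)) '' {a : V₁ | K.Adj v₁ a ∧ a ∈ A})
          ∪ Sym2.map ψ₂ '' {f | f ∈ L.edgeSet ∧ v₂ ∉ f} := by
      apply Set.eq_of_subset_of_subset
      · intro w hw
        induction w with
        | _ u u' =>
          obtain ⟨hadj, hall⟩ := hw
          rw [SimpleGraph.mem_edgeSet] at hadj
          have hu : u ∈ A' A := hall u (Sym2.mem_mk_left u u')
          have hu' : u' ∈ A' A := hall u' (Sym2.mem_mk_right u u')
          rcases hcover u with ⟨a, rfl⟩ | ⟨b, rfl⟩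
          · rcases hcover u' with ⟨a', rfl⟩ | ⟨b', rfl⟩
            · refine Or.inl (Or.inl ⟨s(a.1, a'.1), ⟨(hll a a').mp hadj, ?_, ?_⟩, ?_⟩)
              · intro v hv
                rcases Sym2.mem_iff.mp hv with h | h
                · exact h ▸ (hA'l A a).mp hu
                · exact h ▸ (hA'l A a').mp hu'
              · intro hv
                rcases Sym2.mem_iff.mp hv with h | h
                · exact a.2 h.symm
                · exact a'.2 h.symm
              · rw [Sym2.map_pair_eq, hψ a.1 a.2, hψ a'.1 a'.2]
            · obtain ⟨hK1, hK2⟩ := (hlr a b').mp hadj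
              refine Or.inl (Or.inr ⟨a.1, ⟨hK1, (hA'l A a).mp hu⟩, ?_⟩)
              show s(ψ a.1, ρ a.1) = _
              rw [hψ a.1 a.2, hρ a.1 (hφv a.1 hK1)]
              have hb : (⟨φ a.1, hφv a.1 hK1⟩ : {b : V₂ // b ≠ v₂}) = b' := Subtype.ext hK2
              rw [hb]
          · rcases hcover u' with ⟨a', rfl⟩ | ⟨b', rfl⟩
            · obtain ⟨hK1, hK2⟩ := (hlr a' b).mp hadj.symm
              refine Or.inl (Or.inr ⟨a'.1, ⟨hK1, (hA'l A a').mp hu'⟩, ?_⟩)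
              show s(ψ a'.1, ρ a'.1) = _
              rw [hψ a'.1 a'.2, hρ a'.1 (hφv a'.1 hK1)]
              have hb : (⟨φ a'.1, hφv a'.1 hK1⟩ : {b : V₂ // b ≠ v₂}) = b := Subtype.ext hK2
              rw [hb, Sym2.eq_swap]
            · refine Or.inr ⟨s(b.1, b'.1), ⟨(hrr b b').mp hadj, ?_⟩, ?_⟩
              · intro hv
                rcases Sym2.mem_iff.mp hv with h | h
                · exact b.2 h.symm
                · exact b'.2 h.symm
              · rw [Sym2.map_pair_eq, hψ₂ b.1 b.2, hψ₂ b'.1 b'.2]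
      · rintro w (hw | hw)
        · rcases hw with ⟨e, ⟨he, hallA, hv1⟩, rfl⟩ | ⟨a, ⟨hadj, haA⟩, rfl⟩
          · induction e with
            | _ x y =>
              rw [SimpleGraph.mem_edgeSet] at he
              have hxv : x ≠ v₁ := fun h => hv1 (h ▸ Sym2.mem_mk_left x y)
              have hyv : y ≠ v₁ := fun h => hv1 (h ▸ Sym2.mem_mk_right x y)
              rw [Sym2.map_pair_eq, hψ x hxv, hψ y hyv]
              refine ⟨(hll _ _).mpr he, ?_⟩
              intro v hv
              rcases Sym2.mem_iff.mp hv with h | h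
              · exact h ▸ (hA'l A ⟨x, hxv⟩).mpr (hallA x (Sym2.mem_mk_left x y))
              · exact h ▸ (hA'l A ⟨y, hyv⟩).mpr (hallA y (Sym2.mem_mk_right x y))
          · show s(ψ a, ρ a) ∈ _
            rw [hψ a hadj.ne', hρ a (hφv a hadj)]
            refine ⟨(hlr _ _).mpr ⟨hadj, rfl⟩, ?_⟩
            intro v hv
            rcases Sym2.mem_iff.mp hv with h | h
            · exact h ▸ (hA'l A ⟨a, hadj.ne'⟩).mpr haA
            · exact h ▸ (hA'r A ⟨φ a, hφv a hadj⟩).mpr hvA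
        · rcases hw with ⟨e, ⟨he, hv2⟩, rfl⟩
          induction e with
          | _ x y =>
            rw [SimpleGraph.mem_edgeSet] at he
            have hxv : x ≠ v₂ := fun h => hv2 (h ▸ Sym2.mem_mk_left x y)
            have hyv : y ≠ v₂ := fun h => hv2 (h ▸ Sym2.mem_mk_right x y)
            rw [Sym2.map_pair_eq, hψ₂ x hxv, hψ₂ y hyv]
            refine ⟨(hrr _ _).mpr he, ?_⟩
            intro v hv
            rcases Sym2.mem_iff.mp hv with h | h
            · exact h ▸ (hA'r A ⟨x, hxv⟩).mpr hvA
            · exact h ▸ (hA'r A ⟨y, hyv⟩).mpr hvA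
    -- membership shape facts
    have hS1shape : ∀ e ∈ Sym2.map ψ '' {f | f ∈ K.edgeSet ∧ (∀ v ∈ f, v ∈ A) ∧ v₁ ∉ f},
        ∀ u ∈ e, ∃ a : {a : V₁ // a ≠ v₁}, u = eqv (.inl a) := by
      rintro e ⟨f, ⟨hf, -, hv1⟩, rfl⟩ u hu
      rw [Sym2.mem_map] at hu
      obtain ⟨x, hx, rfl⟩ := hu
      have hxv : x ≠ v₁ := fun h => hv1 (h ▸ hx)
      exact ⟨⟨x, hxv⟩, (hψ x hxv)⟩
    have hS3shape : ∀ e ∈ Sym2.map ψ₂ '' {f | f ∈ L.edgeSet ∧ v₂ ∉ f},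
        ∀ u ∈ e, ∃ b : {b : V₂ // b ≠ v₂}, u = eqv (.inr b) := by
      rintro e ⟨f, ⟨hf, hv2⟩, rfl⟩ u hu
      rw [Sym2.mem_map] at hu
      obtain ⟨x, hx, rfl⟩ := hu
      have hxv : x ≠ v₂ := fun h => hv2 (h ▸ hx)
      exact ⟨⟨x, hxv⟩, (hψ₂ x hxv)⟩
    have hS2inr : ∀ e ∈ (fun a => s(ψ a, ρ a)) '' {a : V₁ | K.Adj v₁ a ∧ a ∈ A},
        ∃ b : {b : V₂ // b ≠ v₂}, eqv (.inr b) ∈ e := by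
      rintro e ⟨a, ⟨hadj, -⟩, rfl⟩
      refine ⟨⟨φ a, hφv a hadj⟩, ?_⟩
      rw [← hρ a (hφv a hadj)]
      exact Sym2.mem_mk_right _ _
    have hS2inl : ∀ e ∈ (fun a => s(ψ a, ρ a)) '' {a : V₁ | K.Adj v₁ a ∧ a ∈ A},
        ∃ a : {a : V₁ // a ≠ v₁}, eqv (.inl a) ∈ e := by
      rintro e ⟨a, ⟨hadj, -⟩, rfl⟩
      refine ⟨⟨a, hadj.ne'⟩, ?_⟩
      rw [← hψ a hadj.ne']
      exact Sym2.mem_mk_left _ _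
    -- disjointness
    have d12 : Disjoint (Sym2.map ψ '' {f | f ∈ K.edgeSet ∧ (∀ v ∈ f, v ∈ A) ∧ v₁ ∉ f})
        ((fun a => s(ψ a, ρ a)) '' {a : V₁ | K.Adj v₁ a ∧ a ∈ A}) := by
      rw [Set.disjoint_left]
      intro e he1 he2
      obtain ⟨b, hb⟩ := hS2inr e he2
      obtain ⟨a, ha⟩ := hS1shape e he1 _ hb
      exact hne_lr a b ha.symm
    have d3 : Disjoint ((Sym2.map ψ '' {f | f ∈ K.edgeSet ∧ (∀ v ∈ f, v ∈ A) ∧ v₁ ∉ f})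
        ∪ ((fun a => s(ψ a, ρ a)) '' {a : V₁ | K.Adj v₁ a ∧ a ∈ A}))
        (Sym2.map ψ₂ '' {f | f ∈ L.edgeSet ∧ v₂ ∉ f}) := by
      rw [Set.disjoint_left]
      rintro e (he1 | he2) he3
      · obtain ⟨b, hb⟩ := hS3shape e he3 _ (Sym2.out_fst_mem e)
        obtain ⟨a, ha⟩ := hS1shape e he1 _ (Sym2.out_fst_mem e)
        exact hne_lr a b (ha.symm.trans hb)
      · obtain ⟨a, ha⟩ := hS2inl e he2
        obtain ⟨b, hb⟩ := hS3shape e he3 _ ha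
        exact hne_lr a b hb
    have hS2injOn : Set.InjOn (fun a => s(ψ a, ρ a)) {a : V₁ | K.Adj v₁ a ∧ a ∈ A} := by
      rintro a ⟨ha, -⟩ a' ⟨ha', -⟩ h
      simp only [Sym2.eq_iff] at h
      rcases h with ⟨h1, -⟩ | ⟨h1, -⟩
      · exact hψinj h1
      · exfalso
        rw [hψ a ha.ne', hρ a' (hφv a' ha')] at h1
        exact hne_lr _ _ h1
    have hdecomp : {f | f ∈ K.edgeSet ∧ ∀ v ∈ f, v ∈ A}
        = {f | f ∈ K.edgeSet ∧ (∀ v ∈ f, v ∈ A) ∧ v₁ ∉ f}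
          ∪ (fun a => s(v₁, a)) '' {a : V₁ | K.Adj v₁ a ∧ a ∈ A} := by
      apply Set.eq_of_subset_of_subset
      · intro e he
        induction e with
        | _ x y =>
          obtain ⟨he, hall⟩ := he
          rw [SimpleGraph.mem_edgeSet] at he
          by_cases hx : x = v₁
          · refine Or.inr ⟨y, ⟨?_, hall y (Sym2.mem_mk_right x y)⟩, by rw [hx]⟩
            rw [← hx]; exact he
          · by_cases hy : y = v₁
            · refine Or.inr ⟨x, ⟨?_, hall x (Sym2.mem_mk_left x y)⟩, ?_⟩
              · rw [← hy]; exact he.symm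
              · rw [Sym2.eq_swap, hy]
            · refine Or.inl ⟨he, hall, ?_⟩
              intro hv
              rcases Sym2.mem_iff.mp hv with h | h
              · exact hx h.symm
              · exact hy h.symm
      · rintro e (⟨he, hall, -⟩ | ⟨a, ⟨hadj, haA⟩, rfl⟩)
        · exact ⟨he, hall⟩
        · refine ⟨hadj, ?_⟩
          intro v hv
          rcases Sym2.mem_iff.mp hv with h | h
          · exact h ▸ hvA
          · exact h ▸ haA
    have hd : Disjoint {f | f ∈ K.edgeSet ∧ (∀ v ∈ f, v ∈ A) ∧ v₁ ∉ f}
        ((fun a => s(v₁, a)) '' {a : V₁ | K.Adj v₁ a ∧ a ∈ A}) := by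
      rw [Set.disjoint_left]
      rintro e ⟨-, -, hv1⟩ ⟨a, -, rfl⟩
      exact hv1 (Sym2.mem_mk_left v₁ a)
    have hvinjOn : Set.InjOn (fun a => s(v₁, a)) {a : V₁ | K.Adj v₁ a ∧ a ∈ A} := by
      rintro a ⟨ha, -⟩ a' ⟨ha', -⟩ h
      simp only [Sym2.eq_iff] at h
      rcases h with ⟨-, h⟩ | ⟨h1, h2⟩
      · exact h
      · exact absurd h2 ha.ne'
    rw [hsplit, Set.ncard_union_eq d3 (Set.toFinite _) (Set.toFinite _),
      Set.ncard_union_eq d12 (Set.toFinite _) (Set.toFinite _),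
      Set.ncard_image_of_injOn ((Sym2.map.injective hψinj).injOn),
      Set.ncard_image_of_injOn ((Sym2.map.injective hψ₂inj).injOn),
      Set.ncard_image_of_injOn hS2injOn, hdecomp,
      Set.ncard_union_eq hd (Set.toFinite _) (Set.toFinite _),
      Set.ncard_image_of_injOn hvinjOn]
  have hbetti₂ : ∀ A : Set V₁, v₁ ∈ A →
      inducedBetti G (A' A) =
        inducedBetti K A + ((L.edgeFinset.card : ℤ) - Fintype.card V₂ + 1) - 2 := by
    intro A hvA
    have hN := hbetti₂pre A hvA
    have hAeq : A' A = ψ '' (A \ {v₁})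
        ∪ Set.range (fun b : {b : V₂ // b ≠ v₂} => eqv (.inr b)) := by
      apply Set.eq_of_subset_of_subset
      · intro u hu
        rcases hcover u with ⟨a, rfl⟩ | ⟨b, rfl⟩
        · exact Or.inl ⟨a.1, ⟨(hA'l A a).mp hu, a.2⟩, by rw [hψ a.1 a.2]⟩
        · exact Or.inr ⟨b, rfl⟩
      · rintro u (⟨x, ⟨hx, hxv⟩, rfl⟩ | ⟨b, rfl⟩)
        · have hxv' : x ≠ v₁ := hxv
          rw [hψ x hxv']
          exact (hA'l A ⟨x, hxv'⟩).mpr hx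
        · exact (hA'r A b).mpr hvA
    have hdisj : Disjoint (ψ '' (A \ {v₁}))
        (Set.range (fun b : {b : V₂ // b ≠ v₂} => eqv (.inr b))) := by
      rw [Set.disjoint_left]
      rintro u ⟨x, ⟨-, hxv⟩, rfl⟩ ⟨b, hb⟩
      have hxv' : x ≠ v₁ := hxv
      rw [hψ x hxv'] at hb
      exact hne_lr _ _ hb.symm
    have hc1 : (ψ '' (A \ {v₁})).ncard + 1 = A.ncard := by
      rw [Set.ncard_image_of_injOn (hψinj.injOn)]
      exact Set.ncard_diff_singleton_add_one hvA (Set.toFinite _)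
    have hc2 : (Set.range (fun b : {b : V₂ // b ≠ v₂} => eqv (.inr b))).ncard + 1
        = Fintype.card V₂ := by
      rw [← Set.image_univ, Set.ncard_image_of_injOn
        (fun b _ b' _ h => Subtype.ext (hinr_inj _ _ h)), Set.ncard_univ,
        Nat.card_eq_fintype_card]
      have h1 : Fintype.card {b : V₂ // ¬ b = v₂}
          = Fintype.card V₂ - Fintype.card {b : V₂ // b = v₂} :=
        Fintype.card_subtype_compl _
      have h2 : Fintype.card {b : V₂ // b = v₂} = 1 := Fintype.card_subtype_eq v₂
      have h3 : 1 ≤ Fintype.card V₂ := Fintype.card_pos_iff.mpr ⟨v₂⟩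
      have h4 : Fintype.card {b : V₂ // b ≠ v₂} = Fintype.card {b : V₂ // ¬ b = v₂} := rfl
      omega
    unfold inducedBetti
    rw [hN, hAeq, Set.ncard_union_eq hdisj (Set.toFinite _) (Set.toFinite _)]
    push_cast
    omega
  -- cycles
  have hLcyc : ∀ T : Set V, (∀ b, eqv (.inr b) ∈ T) → ¬(G.induce T).IsAcyclic := by
    intro T hT
    refine not_acyclic_transfer ψ₂ (fun x _ y _ h => hψ₂inj h) ?_ ?_
      (cubic_del_vertex_cycle L v₂ hL)
    · intro y hy; rw [hψ₂ y hy]; exact hT _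
    · intro x hx y hy hxy
      rw [hψ₂ x hx, hψ₂ y hy, hrr]
      exact hxy
  have hKtrans : ∀ (A : Set V₁) (T : Set V), v₁ ∉ A →
      (∀ (x : V₁) (h : x ≠ v₁), x ∈ A → eqv (.inl ⟨x, h⟩) ∈ T) →
      ¬(K.induce A).IsAcyclic → ¬(G.induce T).IsAcyclic := by
    intro A T hv hmem h
    refine not_acyclic_transfer ψ (fun x _ y _ hxy => hψinj hxy) ?_ ?_ h
    · intro x hx
      have hxv : x ≠ v₁ := fun h' => hv (h' ▸ hx)
      rw [hψ x hxv]; exact hmem x hxv hx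
    · intro x hx y hy hxy
      have hxv : x ≠ v₁ := fun h' => hv (h' ▸ hx)
      have hyv : y ≠ v₁ := fun h' => hv (h' ▸ hy)
      rw [hψ x hxv, hψ y hyv, hll]
      exact hxy
  -- Part 1
  have part1 : Even ((K.edgeFinset.card : ℤ) - Fintype.card V₁ + 1) := by
    by_contra hodd
    rw [Int.not_even_iff_odd] at hodd
    have hvA : v₁ ∉ {x : V₁ | x ≠ v₁} := by simp
    have hNset : {f | f ∈ K.edgeSet ∧ ∀ v ∈ f, v ∈ {x : V₁ | x ≠ v₁}}
        = {f | f ∈ K.edgeSet ∧ v₁ ∉ f} := by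
      ext e
      constructor
      · rintro ⟨he, hall⟩; exact ⟨he, fun hv => (hall v₁ hv) rfl⟩
      · rintro ⟨he, hv⟩; exact ⟨he, fun v hvmem h => hv (h ▸ hvmem)⟩
    have hAcard : ({x : V₁ | x ≠ v₁} : Set V₁).ncard + 1 = Fintype.card V₁ := by
      have hs : {x : V₁ | x ≠ v₁} = (Set.univ : Set V₁) \ {v₁} := by ext x; simp
      rw [hs, Set.ncard_diff_singleton_add_one (Set.mem_univ v₁), Set.ncard_univ,
        Nat.card_eq_fintype_card]
    have hb1 : inducedBetti K {x : V₁ | x ≠ v₁} =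
        ((K.edgeFinset.card : ℤ) - Fintype.card V₁ + 1) - 2 := by
      unfold inducedBetti
      rw [hNset]
      omega
    have hcyc1 : ¬(G.induce (A' {x : V₁ | x ≠ v₁})).IsAcyclic :=
      hKtrans _ _ hvA (fun x h hx => (hA'l _ ⟨x, h⟩).mpr hx) (cubic_del_vertex_cycle K v₁ hK)
    have hcyc2 : ¬(G.induce (A' {x : V₁ | x ≠ v₁})ᶜ).IsAcyclic :=
      hLcyc _ (fun b => by simp only [Set.mem_compl_iff]; rw [hA'r]; simp)
    have hoddG : Odd (inducedBetti G (A' {x : V₁ | x ≠ v₁})) := by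
      rw [hbetti₁ _ hvA, hb1]
      obtain ⟨k, hk⟩ := hodd
      exact ⟨k - 1, by omega⟩
    have h4 := hGodd _ hcyc1 hcyc2 hoddG
    rw [hcut] at h4
    have hcutset : cutEdges K {x : V₁ | x ≠ v₁} = (fun a => s(a, v₁)) '' (K.neighborSet v₁) := by
      apply Set.eq_of_subset_of_subset
      · rintro e ⟨x, y, rfl, hadj, hx, hy⟩
        have hyv : y = v₁ := by by_contra h; exact hy h
        exact ⟨x, (K.mem_neighborSet v₁ x).mpr (hyv ▸ hadj).symm, by rw [hyv]⟩
      · rintro e ⟨a, ha, rfl⟩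
        have ha' : K.Adj v₁ a := (K.mem_neighborSet v₁ a).mp ha
        exact ⟨a, v₁, rfl, ha'.symm, ha'.ne', by simp⟩
    have hnb : (K.neighborSet v₁).ncard = 3 := by
      rw [Set.ncard_eq_toFinset_card' (K.neighborSet v₁)]
      have : (K.neighborSet v₁).toFinset = K.neighborFinset v₁ := rfl
      rw [this, K.card_neighborFinset_eq_degree, hK]
    have hinj3 : Set.InjOn (fun a => s(a, v₁)) (K.neighborSet v₁) := by
      intro a ha a' ha' h
      simp only [Sym2.eq_iff] at h
      rcases h with ⟨h1, -⟩ | ⟨h1, h2⟩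
      · exact h1
      · exact h1.trans h2
    rw [hcutset, Set.ncard_image_of_injOn hinj3, hnb] at h4
    omega
  refine ⟨part1, fun hEvenL => ?_⟩
  intro A h1 h2 h3
  rw [← hcut A]
  by_cases hv : v₁ ∈ A
  · refine hGodd (A' A) ?_ ?_ ?_
    · exact hLcyc _ (fun b => (hA'r A b).mpr hv)
    · refine hKtrans Aᶜ (A' A)ᶜ (by simp [hv]) ?_ h2
      intro x h hx
      simp only [Set.mem_compl_iff]
      rw [hA'l A ⟨x, h⟩]
      exact hx
    · rw [hbetti₂ A hv]
      obtain ⟨k, hk⟩ := h3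
      obtain ⟨m, hm⟩ := hEvenL
      exact ⟨k + m - 1, by omega⟩
  · refine hGodd (A' A) ?_ ?_ ?_
    · refine hKtrans A (A' A) hv ?_ h1
      intro x h hx; rw [hA'l A ⟨x, h⟩]; exact hx
    · refine hLcyc _ (fun b => ?_)
      simp only [Set.mem_compl_iff]
      rw [hA'r A b]
      exact hv
    · rw [hbetti₁ A hv]; exact h3


/-- If a 3-connected, odd-cyclically 4-connected cubic graph `G` is a 3-sum `K * L` of
cubic graphs `K` and `L`, then both `K` and `L` have even Betti number and both are
odd-cyclically 4-connected. -/
theorem stmt18 {V₁ V₂ : Type*} [Fintype V₁] [Fintype V₂] [DecidableEq V₁] [DecidableEq V₂]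
    (K : SimpleGraph V₁) (L : SimpleGraph V₂) [DecidableRel K.Adj] [DecidableRel L.Adj]
    (v₁ : V₁) (v₂ : V₂) (hK : ∀ v, K.degree v = 3) (hL : ∀ v, L.degree v = 3)
    (φ : V₁ → V₂) (hφ : Set.BijOn φ (K.neighborSet v₁) (L.neighborSet v₂))
    (G : SimpleGraph ({a : V₁ // a ≠ v₁} ⊕ {b : V₂ // b ≠ v₂})) [DecidableRel G.Adj]
    (hll : ∀ a a' : {a : V₁ // a ≠ v₁}, G.Adj (.inl a) (.inl a') ↔ K.Adj a.1 a'.1)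
    (hrr : ∀ b b' : {b : V₂ // b ≠ v₂}, G.Adj (.inr b) (.inr b') ↔ L.Adj b.1 b'.1)
    (hlr : ∀ (a : {a : V₁ // a ≠ v₁}) (b : {b : V₂ // b ≠ v₂}),
      G.Adj (.inl a) (.inr b) ↔ (K.Adj v₁ a.1 ∧ φ a.1 = b.1))
    (hG3 : ThreeConnected G) (hGodd : OddCyc4Conn G) (hGcubic : ∀ v, G.degree v = 3) :
    Even ((K.edgeFinset.card : ℤ) - Fintype.card V₁ + 1) ∧
    Even ((L.edgeFinset.card : ℤ) - Fintype.card V₂ + 1) ∧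
    OddCyc4Conn K ∧ OddCyc4Conn L := by
  classical
  have m1 := master K L v₁ v₂ hK hL φ hφ G (Equiv.refl _)
    (fun a a' => hll a a') (fun b b' => hrr b b') (fun a b => hlr a b) hGodd
  have hneV₁ : Nonempty V₁ := ⟨v₁⟩
  have hinv : Set.InvOn (Function.invFunOn φ (K.neighborSet v₁)) φ
      (K.neighborSet v₁) (L.neighborSet v₂) := hφ.invOn_invFunOn
  have hφ' : Set.BijOn (Function.invFunOn φ (K.neighborSet v₁))
      (L.neighborSet v₂) (K.neighborSet v₁) := Set.BijOn.symm hinv.symm hφ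
  have hlr' : ∀ (b : {b : V₂ // b ≠ v₂}) (a : {a : V₁ // a ≠ v₁}),
      G.Adj ((Equiv.sumComm _ _) (Sum.inl b)) ((Equiv.sumComm _ _) (Sum.inr a)) ↔
        (L.Adj v₂ b.1 ∧ Function.invFunOn φ (K.neighborSet v₁) b.1 = a.1) := by
    intro b a
    simp only [Equiv.sumComm_apply, Sum.swap_inl, Sum.swap_inr]
    rw [G.adj_comm, hlr a b]
    constructor
    · rintro ⟨h1, h2⟩
      have hb : b.1 ∈ L.neighborSet v₂ := h2 ▸ hφ.mapsTo h1
      refine ⟨hb, ?_⟩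
      rw [← h2, hinv.1 h1]
    · rintro ⟨h1, h2⟩
      have ha : (Function.invFunOn φ (K.neighborSet v₁)) b.1 ∈ K.neighborSet v₁ :=
        hφ'.mapsTo h1
      rw [← h2]
      exact ⟨ha, hinv.2 h1⟩
  have m2 := master L K v₂ v₁ hL hK (Function.invFunOn φ (K.neighborSet v₁)) hφ' G
    (Equiv.sumComm _ _)
    (fun b b' => by simpa using hrr b b')
    (fun a a' => by simpa using hll a a')
    hlr' hGodd
  exact ⟨m1.1, m2.1, m1.2 m2.1, m2.2 m1.1⟩
end

section
/- Let G₁ and G₂ be connected cubic graphs, each with a spanning tree Tᵢ whose cotree has exactly one odd component, consisting of a single edge eᵢ. Form G from (G₁ − e₁) ∪ (G₂ − e₂) by adding two independent edges f₁, f₂ joining the 2-valent vertices across, making G cubic. Then (T₁ ∪ T₂) + f₁ is a spanning tree of G whose cotree has exactly one odd component, consisting of the single edge f₂; in particular G is upper-embeddable with odd Betti number. -/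
/-!
Gluing the spanning trees `T₁`, `T₂` along the new edge `f₁ = a₁a₂` gives a spanning tree `T` of
`G`, and the cotree of `T` is `(G₁ − T₁ − e₁) ⊕ (G₂ − T₂ − e₂) + f₂`. Since the cotree component
of `eᵢ = aᵢbᵢ` consists of `eᵢ` alone, deleting `eᵢ` isolates `aᵢ` and `bᵢ` and leaves the other,
even, components untouched. Hence `f₂ = b₁b₂` is a cotree component with one edge and every other
cotree component is even. Finally the Betti number `|E| − |V| + 1` of `G` is the number of cotree
edges, the sum of the sizes of the cotree components, which is odd.
-/

open SimpleGraph Finset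

namespace SimpleGraph
variable {V W : Type*} {G : SimpleGraph V} {H : SimpleGraph W}

lemma reachable_sum_inl_iff {v v' : V} :
    (G ⊕g H).Reachable (.inl v) (.inl v') ↔ G.Reachable v v' := by
  refine ⟨fun h ↦ ?_, fun h ↦ h.map Embedding.sumInl.toHom⟩
  rw [reachable_iff_reflTransGen] at h ⊢
  refine h.lift' (Sum.elim id fun _ ↦ v) ?_
  rintro (x | x) (y | y) hxy
  · exact .single (by simpa using hxy)
  · simp at hxy
  · simp at hxy
  · exact .refl

lemma reachable_sum_inr_iff {w w' : W} :
    (G ⊕g H).Reachable (.inr w) (.inr w') ↔ H.Reachable w w' := by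
  refine ⟨fun h ↦ ?_, fun h ↦ h.map Embedding.sumInr.toHom⟩
  rw [reachable_iff_reflTransGen] at h ⊢
  refine h.lift' (Sum.elim (fun _ ↦ w) id) ?_
  rintro (x | x) (y | y) hxy
  · exact .refl
  · simp at hxy
  · simp at hxy
  · exact .single (by simpa using hxy)

lemma deleteEdges_sum_inl (v v' : V) :
    (G ⊕g H).deleteEdges {s(.inl v, .inl v')} = G.deleteEdges {s(v, v')} ⊕g H := by
  ext (x | x) (y | y) <;> simp

lemma deleteEdges_sum_inr (w w' : W) :
    (G ⊕g H).deleteEdges {s(.inr w, .inr w')} = G ⊕g H.deleteEdges {s(w, w')} := by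
  ext (x | x) (y | y) <;> simp

lemma IsAcyclic.sum (hG : G.IsAcyclic) (hH : H.IsAcyclic) : (G ⊕g H).IsAcyclic := by
  rw [isAcyclic_iff_forall_adj_isBridge]
  rintro (x | x) (y | y) hxy
  · rw [isBridge_iff, deleteEdges_sum_inl, reachable_sum_inl_iff, ← isBridge_iff]
    exact isAcyclic_iff_forall_adj_isBridge.mp hG (by simpa using hxy)
  · simp at hxy
  · simp at hxy
  · rw [isBridge_iff, deleteEdges_sum_inr, reachable_sum_inr_iff, ← isBridge_iff]
    exact isAcyclic_iff_forall_adj_isBridge.mp hH (by simpa using hxy)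

lemma IsTree.sum_sup_edge (hG : G.IsTree) (hH : H.IsTree) (v : V) (w : W) :
    ((G ⊕g H) ⊔ edge (.inl v) (.inr w)).IsTree :=
  ⟨hG.connected.sum_sup_edge hH.connected,
    (hG.isAcyclic.sum hH.isAcyclic).sup_edge_of_not_reachable (not_reachable_sum_inl_inr v w)⟩

lemma fromEdgeSet_image_sum_union (v : V) (w : W) :
    fromEdgeSet (Sym2.map Sum.inl '' G.edgeSet ∪ Sym2.map Sum.inr '' H.edgeSet ∪
      {s(.inl v, .inr w)}) = (G ⊕g H) ⊔ edge (.inl v) (.inr w) := by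
  ext (x | x) (y | y) <;> simp [Sym2.exists] <;> grind [Adj.symm, Adj.ne]

end SimpleGraph

section Cotree
variable {V W : Type*} {H : SimpleGraph V}

lemma mk_mem_cotreeCompEdges_iff {x u v : V} :
    s(u, v) ∈ cotreeCompEdges H (H.connectedComponentMk x) ↔ H.Adj u v ∧ H.Reachable x u := by
  simp only [cotreeCompEdges, Set.mem_ofPred_eq, mem_edgeSet, Sym2.forall_mem_pair,
    ConnectedComponent.eq]
  exact ⟨fun ⟨h, hu, _⟩ ↦ ⟨h, hu.symm⟩, fun ⟨h, hu⟩ ↦ ⟨h, hu.symm, (hu.trans h.reachable).symm⟩⟩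

lemma exists_adj_of_odd_ncard_cotreeCompEdges {c : H.ConnectedComponent}
    (hc : Odd (cotreeCompEdges H c).ncard) : ∃ u v, H.Adj u v ∧ H.connectedComponentMk u = c := by
  obtain ⟨e, he, hec⟩ := Set.nonempty_of_ncard_ne_zero hc.pos.ne'
  induction e using Sym2.ind with | _ u v => exact ⟨u, v, he, hec u (Sym2.mem_mk_left u v)⟩

lemma iUnion_cotreeCompEdges : ⋃ c, cotreeCompEdges H c = H.edgeSet := by
  ext e
  induction e using Sym2.ind with | _ u v =>
    exact ⟨fun he ↦ (Set.mem_iUnion.mp he).elim fun _ h ↦ h.1,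
      fun he ↦ Set.mem_iUnion.mpr ⟨_, mk_mem_cotreeCompEdges_iff.mpr ⟨he, .refl u⟩⟩⟩

lemma pairwise_disjoint_cotreeCompEdges :
    Pairwise (Function.onFun Disjoint (cotreeCompEdges H)) := by
  intro c c' hcc'
  refine Set.disjoint_left.mpr fun e he he' ↦ hcc' ?_
  induction e using Sym2.ind with | _ u v =>
    exact (he.2 u (Sym2.mem_mk_left u v)).symm.trans (he'.2 u (Sym2.mem_mk_left u v))

lemma ncard_edgeSet_eq_finsum_ncard_cotreeCompEdges [Finite V] :
    H.edgeSet.ncard = ∑ᶠ c, (cotreeCompEdges H c).ncard := by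
  rw [← Set.ncard_iUnion_of_finite (fun _ ↦ Set.toFinite _) pairwise_disjoint_cotreeCompEdges,
    iUnion_cotreeCompEdges]

lemma odd_ncard_edgeSet_of_forall_odd_eq [Finite V] {c₀ : H.ConnectedComponent}
    (h₀ : Odd (cotreeCompEdges H c₀).ncard)
    (huniq : ∀ c, Odd (cotreeCompEdges H c).ncard → c = c₀) : Odd H.edgeSet.ncard := by
  have := Fintype.ofFinite H.ConnectedComponent
  rw [ncard_edgeSet_eq_finsum_ncard_cotreeCompEdges, finsum_eq_sum_of_fintype,
    Finset.odd_sum_iff_odd_card_odd]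
  convert odd_one
  exact Finset.card_eq_one.mpr ⟨c₀, by ext c; constructor <;> simp_all⟩

lemma cotreeCompEdges_mk_eq_image {L : SimpleGraph W} (φ : L →g H) (x : W)
    (hlift : ∀ y z, L.Reachable x y → H.Adj (φ y) z → ∃ z', φ z' = z ∧ L.Adj y z') :
    cotreeCompEdges H (H.connectedComponentMk (φ x)) =
      Sym2.map φ '' cotreeCompEdges L (L.connectedComponentMk x) := by
  have hreach : ∀ u, H.Reachable (φ x) u → ∃ y, φ y = u ∧ L.Reachable x y := by
    intro u hu
    rw [reachable_iff_reflTransGen] at hu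
    induction hu with
    | refl => exact ⟨x, rfl, .refl x⟩
    | tail _ huv ih =>
      obtain ⟨y, rfl, hy⟩ := ih
      obtain ⟨z, rfl, hyz⟩ := hlift y _ hy huv
      exact ⟨z, rfl, hy.trans hyz.reachable⟩
  apply Set.Subset.antisymm
  · intro e
    induction e using Sym2.ind with | _ u v => ?_
    rw [mk_mem_cotreeCompEdges_iff]
    rintro ⟨huv, hu⟩
    obtain ⟨y, rfl, hy⟩ := hreach u hu
    obtain ⟨z, rfl, hyz⟩ := hlift y v hy huv
    exact ⟨s(y, z), mk_mem_cotreeCompEdges_iff.mpr ⟨hyz, hy⟩, rfl⟩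
  · rintro _ ⟨e, he, rfl⟩
    induction e using Sym2.ind with | _ y z => ?_
    rw [mk_mem_cotreeCompEdges_iff] at he
    exact mk_mem_cotreeCompEdges_iff.mpr ⟨φ.map_adj he.1, he.2.map φ⟩

lemma ncard_cotreeCompEdges_mk_eq {L : SimpleGraph W} (φ : L →g H) (hφ : Function.Injective φ)
    (x : W) (hlift : ∀ y z, L.Reachable x y → H.Adj (φ y) z → ∃ z', φ z' = z ∧ L.Adj y z') :
    (cotreeCompEdges H (H.connectedComponentMk (φ x))).ncard =
      (cotreeCompEdges L (L.connectedComponentMk x)).ncard := by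
  rw [cotreeCompEdges_mk_eq_image φ x hlift,
    Set.ncard_image_of_injective _ (Sym2.map.injective hφ)]

end Cotree

section DeleteEdge
variable {V : Type*} {K : SimpleGraph V} {a b : V}

lemma mk_eq_of_cotreeCompEdges_eq_singleton {e : Sym2 V}
    (hK : cotreeCompEdges K (K.connectedComponentMk a) = {e}) {u z : V}
    (hu : K.Reachable a u) (huz : K.Adj u z) : s(u, z) = e := by
  simpa [hK] using mk_mem_cotreeCompEdges_iff.mpr ⟨huz, hu⟩

lemma adj_of_cotreeCompEdges_eq_singleton
    (hK : cotreeCompEdges K (K.connectedComponentMk a) = {s(a, b)}) : K.Adj a b :=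
  (mk_mem_cotreeCompEdges_iff.mp (by rw [hK]; exact Set.mem_singleton _)).1

lemma not_adj_deleteEdges_of_cotreeCompEdges_eq
    (hK : cotreeCompEdges K (K.connectedComponentMk a) = {s(a, b)}) (z : V) :
    ¬ (K.deleteEdges {s(a, b)}).Adj b z := by
  have hab := adj_of_cotreeCompEdges_eq_singleton hK
  rw [deleteEdges_adj, Set.mem_singleton_iff]
  exact fun ⟨hbz, hne⟩ ↦ hne (mk_eq_of_cotreeCompEdges_eq_singleton hK hab.reachable hbz)

lemma even_ncard_cotreeCompEdges_deleteEdges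
    (hK : cotreeCompEdges K (K.connectedComponentMk a) = {s(a, b)})
    (huniq : ∀ c, Odd (cotreeCompEdges K c).ncard → c = K.connectedComponentMk a)
    (c : (K.deleteEdges {s(a, b)}).ConnectedComponent) :
    Even (cotreeCompEdges (K.deleteEdges {s(a, b)}) c).ncard := by
  rw [← Nat.not_odd_iff_even]
  intro hc
  obtain ⟨x, y, hxy, rfl⟩ := exists_adj_of_odd_ncard_cotreeCompEdges hc
  have hab := (adj_of_cotreeCompEdges_eq_singleton hK).reachable
  rw [deleteEdges_adj, Set.mem_singleton_iff] at hxy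
  have hxa : ¬ K.Reachable a x := fun hax ↦
    hxy.2 (mk_eq_of_cotreeCompEdges_eq_singleton hK hax hxy.1)
  have hlift : ∀ u z, (K.deleteEdges {s(a, b)}).Reachable x u → K.Adj u z →
      (K.deleteEdges {s(a, b)}).Adj u z := by
    refine fun u z hxu huz ↦ deleteEdges_adj.mpr ⟨huz, fun he ↦ hxa ?_⟩
    have hu : u = a ∨ u = b := Sym2.mem_iff.mp (Set.mem_singleton_iff.mp he ▸ Sym2.mem_mk_left u z)
    have hau : K.Reachable a u := by rcases hu with rfl | rfl; exacts [.refl _, hab]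
    exact hau.trans (hxu.mono (deleteEdges_le _)).symm
  have hcard := ncard_cotreeCompEdges_mk_eq (Hom.ofLE (deleteEdges_le _)) Function.injective_id x
    fun u z hxu huz ↦ ⟨z, rfl, hlift u z hxu huz⟩
  exact hxa (ConnectedComponent.exact (huniq _ (hcard ▸ hc))).symm

end DeleteEdge

section SumSupEdge
variable {V W : Type*} {L₁ : SimpleGraph V} {L₂ : SimpleGraph W} {u : V} {w : W}

lemma eq_or_eq_of_reachable_sum_sup_edge (hu : ∀ z, ¬ L₁.Adj u z) (hw : ∀ z, ¬ L₂.Adj w z)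
    {p : V ⊕ W} (hp : ((L₁ ⊕g L₂) ⊔ edge (.inl u) (.inr w)).Reachable (.inl u) p) :
    p = .inl u ∨ p = .inr w := by
  rw [reachable_iff_reflTransGen] at hp
  induction hp with
  | refl => exact .inl rfl
  | @tail q r _ hqr ih => rcases ih with rfl | rfl <;> rcases r with z | z <;> simp_all [edge_adj]

lemma cotreeCompEdges_sum_sup_edge_inl (hu : ∀ z, ¬ L₁.Adj u z) (hw : ∀ z, ¬ L₂.Adj w z) :
    cotreeCompEdges ((L₁ ⊕g L₂) ⊔ edge (.inl u) (.inr w))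
      (((L₁ ⊕g L₂) ⊔ edge (.inl u) (.inr w)).connectedComponentMk (.inl u)) =
        {s(.inl u, .inr w)} := by
  have hadj : ((L₁ ⊕g L₂) ⊔ edge (.inl u) (.inr w)).Adj (.inl u) (.inr w) := by simp [edge_adj]
  ext e
  induction e using Sym2.ind with | _ p q => ?_
  rw [mk_mem_cotreeCompEdges_iff, Set.mem_singleton_iff]
  constructor
  · rintro ⟨hpq, hp⟩
    rcases eq_or_eq_of_reachable_sum_sup_edge hu hw hp with rfl | rfl <;>
      rcases q with z | z <;> simp_all [edge_adj]
  · intro h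
    rcases Sym2.eq_iff.mp h with ⟨rfl, rfl⟩ | ⟨rfl, rfl⟩
    exacts [⟨hadj, .refl _⟩, ⟨hadj.symm, hadj.reachable⟩]

lemma even_ncard_cotreeCompEdges_sum_sup_edge_inl (hu : ∀ z, ¬ L₁.Adj u z)
    (h₁ : ∀ c, Even (cotreeCompEdges L₁ c).ncard) {x y : V} (hxy : L₁.Adj x y) :
    Even (cotreeCompEdges ((L₁ ⊕g L₂) ⊔ edge (.inl u) (.inr w))
      (((L₁ ⊕g L₂) ⊔ edge (.inl u) (.inr w)).connectedComponentMk (.inl x))).ncard := by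
  have hxu : ¬ L₁.Reachable x u :=
    not_reachable_of_neighborSet_right_eq_empty (fun h ↦ hu y (h ▸ hxy))
      (Set.eq_empty_of_forall_notMem hu)
  let φ : L₁ →g (L₁ ⊕g L₂) ⊔ edge (.inl u) (.inr w) := ⟨Sum.inl, fun h ↦ Or.inl (by simpa)⟩
  convert h₁ (L₁.connectedComponentMk x) using 1
  refine ncard_cotreeCompEdges_mk_eq φ Sum.inl_injective x fun v z hxv hvz ↦ ?_
  rcases z with z | z
  · exact ⟨z, rfl, by simpa [φ, edge_adj] using hvz⟩
  · obtain ⟨rfl, -⟩ : v = u ∧ z = w := by simpa [φ, edge_adj] using hvz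
    exact absurd hxv hxu

lemma even_ncard_cotreeCompEdges_sum_sup_edge_inr (hw : ∀ z, ¬ L₂.Adj w z)
    (h₂ : ∀ c, Even (cotreeCompEdges L₂ c).ncard) {x y : W} (hxy : L₂.Adj x y) :
    Even (cotreeCompEdges ((L₁ ⊕g L₂) ⊔ edge (.inl u) (.inr w))
      (((L₁ ⊕g L₂) ⊔ edge (.inl u) (.inr w)).connectedComponentMk (.inr x))).ncard := by
  have hxw : ¬ L₂.Reachable x w :=
    not_reachable_of_neighborSet_right_eq_empty (fun h ↦ hw y (h ▸ hxy))
      (Set.eq_empty_of_forall_notMem hw)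
  let φ : L₂ →g (L₁ ⊕g L₂) ⊔ edge (.inl u) (.inr w) := ⟨Sum.inr, fun h ↦ Or.inl (by simpa)⟩
  convert h₂ (L₂.connectedComponentMk x) using 1
  refine ncard_cotreeCompEdges_mk_eq φ Sum.inr_injective x fun v z hxv hvz ↦ ?_
  rcases z with z | z
  · obtain ⟨rfl, -⟩ : v = w ∧ z = u := by simpa [φ, edge_adj] using hvz
    exact absurd hxv hxw
  · exact ⟨z, rfl, by simpa [φ, edge_adj] using hvz⟩

lemma eq_of_odd_ncard_cotreeCompEdges_sum_sup_edge (hu : ∀ z, ¬ L₁.Adj u z)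
    (hw : ∀ z, ¬ L₂.Adj w z) (h₁ : ∀ c, Even (cotreeCompEdges L₁ c).ncard)
    (h₂ : ∀ c, Even (cotreeCompEdges L₂ c).ncard)
    (c : ((L₁ ⊕g L₂) ⊔ edge (.inl u) (.inr w)).ConnectedComponent)
    (hc : Odd (cotreeCompEdges _ c).ncard) :
    c = ((L₁ ⊕g L₂) ⊔ edge (.inl u) (.inr w)).connectedComponentMk (.inl u) := by
  obtain ⟨p, q, hpq, rfl⟩ := exists_adj_of_odd_ncard_cotreeCompEdges hc
  rw [← Nat.not_even_iff_odd] at hc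
  rcases p with x | x <;> rcases q with y | y
  · have hxy : L₁.Adj x y := by simpa [edge_adj] using hpq
    exact absurd (even_ncard_cotreeCompEdges_sum_sup_edge_inl hu h₁ hxy) hc
  · obtain ⟨rfl, -⟩ : x = u ∧ y = w := by simpa [edge_adj] using hpq
    rfl
  · obtain ⟨rfl, rfl⟩ : x = w ∧ y = u := by simpa [edge_adj] using hpq
    exact ConnectedComponent.sound hpq.reachable
  · have hxy : L₂.Adj x y := by simpa [edge_adj] using hpq
    exact absurd (even_ncard_cotreeCompEdges_sum_sup_edge_inr hw h₂ hxy) hc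

end SumSupEdge

lemma ncard_edgeSet_sdiff_of_isTree {V : Type*} [Fintype V] {G T : SimpleGraph V}
    [DecidableRel G.Adj] (hTG : T ≤ G) (hT : T.IsTree) :
    ((G \ T).edgeSet.ncard : ℤ) = #G.edgeFinset - Fintype.card V + 1 := by
  have hcard := (isTree_iff_connected_and_card.mp hT).2
  rw [Nat.card_coe_set_eq, Nat.card_eq_fintype_card] at hcard
  have hG : #G.edgeFinset = G.edgeSet.ncard := by rw [← Set.ncard_coe_finset, coe_edgeFinset]
  have hle := Set.ncard_le_ncard (edgeSet_mono hTG)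
  rw [edgeSet_sdiff, Set.ncard_sdiff (edgeSet_mono hTG)]
  omega

section OddTwoSum
variable {V W : Type*} {G₁ T₁ : SimpleGraph V} {G₂ T₂ : SimpleGraph W} {a₁ b₁ : V} {a₂ b₂ : W}

def oddTwoSum (G₁ : SimpleGraph V) (G₂ : SimpleGraph W) (a₁ b₁ : V) (a₂ b₂ : W) :
    SimpleGraph (V ⊕ W) :=
  (G₁.deleteEdges {s(a₁, b₁)} ⊕g G₂.deleteEdges {s(a₂, b₂)}) ⊔ edge (.inl a₁) (.inr a₂) ⊔
    edge (.inl b₁) (.inr b₂)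

lemma eq_oddTwoSum {G : SimpleGraph (V ⊕ W)}
    (hll : ∀ x y : V, G.Adj (.inl x) (.inl y) ↔ (G₁.Adj x y ∧ s(x, y) ≠ s(a₁, b₁)))
    (hrr : ∀ x y : W, G.Adj (.inr x) (.inr y) ↔ (G₂.Adj x y ∧ s(x, y) ≠ s(a₂, b₂)))
    (hlr : ∀ x y, G.Adj (.inl x) (.inr y) ↔ ((x = a₁ ∧ y = a₂) ∨ (x = b₁ ∧ y = b₂))) :
    G = oddTwoSum G₁ G₂ a₁ b₁ a₂ b₂ := by
  ext (x | x) (y | y) <;> simp [oddTwoSum, edge_adj, hll, hrr, hlr, G.adj_comm (.inr _)]; tauto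

lemma sum_sup_edge_le_oddTwoSum (hT₁ : T₁ ≤ G₁) (hT₂ : T₂ ≤ G₂) (he₁ : ¬ T₁.Adj a₁ b₁)
    (he₂ : ¬ T₂.Adj a₂ b₂) :
    (T₁ ⊕g T₂) ⊔ edge (.inl a₁) (.inr a₂) ≤ oddTwoSum G₁ G₂ a₁ b₁ a₂ b₂ := by
  rintro (x | x) (y | y) h <;> simp [oddTwoSum, edge_adj] at h ⊢
  · grind [hT₁ h, Adj.symm]
  · exact .inl h
  · exact .inl h
  · grind [hT₂ h, Adj.symm]

lemma oddTwoSum_sdiff_sum_sup_edge (hab₁ : a₁ ≠ b₁) :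
    oddTwoSum G₁ G₂ a₁ b₁ a₂ b₂ \ ((T₁ ⊕g T₂) ⊔ edge (.inl a₁) (.inr a₂)) =
      ((G₁ \ T₁).deleteEdges {s(a₁, b₁)} ⊕g (G₂ \ T₂).deleteEdges {s(a₂, b₂)}) ⊔
        edge (.inl b₁) (.inr b₂) := by
  ext (x | x) (y | y) <;> simp [oddTwoSum, edge_adj] <;> grind

end OddTwoSum

theorem stmt19_general {V₁ V₂ : Type*} [Fintype V₁] [Fintype V₂]
    (G₁ : SimpleGraph V₁) (G₂ : SimpleGraph V₂)
    (T₁ : SimpleGraph V₁) (T₂ : SimpleGraph V₂)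
    (hT₁ : T₁ ≤ G₁) (hT₂ : T₂ ≤ G₂) (ht₁ : T₁.IsTree) (ht₂ : T₂.IsTree)
    (a₁ b₁ : V₁) (a₂ b₂ : V₂) (hab₁ : a₁ ≠ b₁)
    (he₁ : s(a₁, b₁) ∈ (G₁ \ T₁).edgeSet)
    (he₂ : s(a₂, b₂) ∈ (G₂ \ T₂).edgeSet)
    (hodd₁ : cotreeCompEdges (G₁ \ T₁) ((G₁ \ T₁).connectedComponentMk a₁)
      = {s(a₁, b₁)})
    (hodd₂ : cotreeCompEdges (G₂ \ T₂) ((G₂ \ T₂).connectedComponentMk a₂)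
      = {s(a₂, b₂)})
    (huniq₁ : ∀ c, Odd ((cotreeCompEdges (G₁ \ T₁) c).ncard) →
      c = (G₁ \ T₁).connectedComponentMk a₁)
    (huniq₂ : ∀ c, Odd ((cotreeCompEdges (G₂ \ T₂) c).ncard) →
      c = (G₂ \ T₂).connectedComponentMk a₂)
    (G : SimpleGraph (V₁ ⊕ V₂)) [DecidableRel G.Adj]
    (hll : ∀ x y : V₁, G.Adj (.inl x) (.inl y) ↔ (G₁.Adj x y ∧ s(x, y) ≠ s(a₁, b₁)))
    (hrr : ∀ x y : V₂, G.Adj (.inr x) (.inr y) ↔ (G₂.Adj x y ∧ s(x, y) ≠ s(a₂, b₂)))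
    (hlr : ∀ (x : V₁) (y : V₂), G.Adj (.inl x) (.inr y) ↔
      ((x = a₁ ∧ y = a₂) ∨ (x = b₁ ∧ y = b₂))) :
    ∃ T : SimpleGraph (V₁ ⊕ V₂),
      T = SimpleGraph.fromEdgeSet
        ((Sym2.map Sum.inl '' T₁.edgeSet) ∪ (Sym2.map Sum.inr '' T₂.edgeSet) ∪
          {s(Sum.inl a₁, Sum.inr a₂)}) ∧
      T ≤ G ∧ T.IsTree ∧
      cotreeCompEdges (G \ T) ((G \ T).connectedComponentMk (Sum.inl b₁))
        = {s(Sum.inl b₁, Sum.inr b₂)} ∧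
      (∀ c, Odd ((cotreeCompEdges (G \ T) c).ncard) →
        c = (G \ T).connectedComponentMk (Sum.inl b₁)) ∧
      Odd ((G.edgeFinset.card : ℤ) - (Fintype.card (V₁ ⊕ V₂) : ℤ) + 1) := by
  set T := (T₁ ⊕g T₂) ⊔ edge (.inl a₁) (.inr a₂)
  have hG := eq_oddTwoSum hll hrr hlr
  have hT : T.IsTree := ht₁.sum_sup_edge ht₂ a₁ a₂
  have hTG : T ≤ G := by
    rw [hG]
    exact sum_sup_edge_le_oddTwoSum hT₁ hT₂ he₁.2 he₂.2
  have hcot : G \ T =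
      ((G₁ \ T₁).deleteEdges {s(a₁, b₁)} ⊕g (G₂ \ T₂).deleteEdges {s(a₂, b₂)}) ⊔
        edge (.inl b₁) (.inr b₂) := by
    rw [hG]
    exact oddTwoSum_sdiff_sum_sup_edge hab₁
  have hb₁ := not_adj_deleteEdges_of_cotreeCompEdges_eq hodd₁
  have hb₂ := not_adj_deleteEdges_of_cotreeCompEdges_eq hodd₂
  have hf₂ : cotreeCompEdges (G \ T) ((G \ T).connectedComponentMk (.inl b₁)) =
      {s(.inl b₁, .inr b₂)} := by
    rw [hcot]
    exact cotreeCompEdges_sum_sup_edge_inl hb₁ hb₂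
  have huniq : ∀ c, Odd (cotreeCompEdges (G \ T) c).ncard →
      c = (G \ T).connectedComponentMk (.inl b₁) := by
    rw [hcot]
    exact eq_of_odd_ncard_cotreeCompEdges_sum_sup_edge hb₁ hb₂
      (even_ncard_cotreeCompEdges_deleteEdges hodd₁ huniq₁)
      (even_ncard_cotreeCompEdges_deleteEdges hodd₂ huniq₂)
  refine ⟨T, (fromEdgeSet_image_sum_union a₁ a₂).symm, hTG, hT, hf₂, huniq, ?_⟩
  rw [← ncard_edgeSet_sdiff_of_isTree hTG hT]
  exact (Int.odd_coe_nat _).mpr (odd_ncard_edgeSet_of_forall_odd_eq (by simp [hf₂]) huniq)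

/-- Odd 2-sum: given connected cubic graphs `G₁`, `G₂` with spanning trees `Tᵢ` whose
cotrees have exactly one odd component consisting of the single edge `eᵢ = s(aᵢ, bᵢ)`,
form `G` from `(G₁ − e₁) ∪ (G₂ − e₂)` by adding the two independent edges
`f₁ = s(a₁, a₂)` and `f₂ = s(b₁, b₂)` across. Then `(T₁ ∪ T₂) + f₁` is a spanning tree
of `G` whose cotree has exactly one odd component, namely the single edge `f₂`; in
particular `G` is upper-embeddable with odd Betti number. -/
theorem stmt19 {V₁ V₂ : Type*} [Fintype V₁] [Fintype V₂] [DecidableEq V₁] [DecidableEq V₂]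
    (G₁ : SimpleGraph V₁) (G₂ : SimpleGraph V₂)
    [DecidableRel G₁.Adj] [DecidableRel G₂.Adj]
    (hc₁ : G₁.Connected) (hc₂ : G₂.Connected)
    (h3₁ : ∀ v, G₁.degree v = 3) (h3₂ : ∀ v, G₂.degree v = 3)
    (T₁ : SimpleGraph V₁) (T₂ : SimpleGraph V₂)
    (hT₁ : T₁ ≤ G₁) (hT₂ : T₂ ≤ G₂) (ht₁ : T₁.IsTree) (ht₂ : T₂.IsTree)
    (a₁ b₁ : V₁) (a₂ b₂ : V₂) (hab₁ : a₁ ≠ b₁) (hab₂ : a₂ ≠ b₂)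
    (he₁ : s(a₁, b₁) ∈ (G₁ \ T₁).edgeSet)
    (he₂ : s(a₂, b₂) ∈ (G₂ \ T₂).edgeSet)
    (hodd₁ : cotreeCompEdges (G₁ \ T₁) ((G₁ \ T₁).connectedComponentMk a₁)
      = {s(a₁, b₁)})
    (hodd₂ : cotreeCompEdges (G₂ \ T₂) ((G₂ \ T₂).connectedComponentMk a₂)
      = {s(a₂, b₂)})
    (huniq₁ : ∀ c, Odd ((cotreeCompEdges (G₁ \ T₁) c).ncard) →
      c = (G₁ \ T₁).connectedComponentMk a₁)
    (huniq₂ : ∀ c, Odd ((cotreeCompEdges (G₂ \ T₂) c).ncard) →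
      c = (G₂ \ T₂).connectedComponentMk a₂)
    (G : SimpleGraph (V₁ ⊕ V₂)) [DecidableRel G.Adj]
    (hll : ∀ x y : V₁, G.Adj (.inl x) (.inl y) ↔ (G₁.Adj x y ∧ s(x, y) ≠ s(a₁, b₁)))
    (hrr : ∀ x y : V₂, G.Adj (.inr x) (.inr y) ↔ (G₂.Adj x y ∧ s(x, y) ≠ s(a₂, b₂)))
    (hlr : ∀ (x : V₁) (y : V₂), G.Adj (.inl x) (.inr y) ↔
      ((x = a₁ ∧ y = a₂) ∨ (x = b₁ ∧ y = b₂))) :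
    ∃ T : SimpleGraph (V₁ ⊕ V₂),
      T = SimpleGraph.fromEdgeSet
        ((Sym2.map Sum.inl '' T₁.edgeSet) ∪ (Sym2.map Sum.inr '' T₂.edgeSet) ∪
          {s(Sum.inl a₁, Sum.inr a₂)}) ∧
      T ≤ G ∧ T.IsTree ∧
      cotreeCompEdges (G \ T) ((G \ T).connectedComponentMk (Sum.inl b₁))
        = {s(Sum.inl b₁, Sum.inr b₂)} ∧
      (∀ c, Odd ((cotreeCompEdges (G \ T) c).ncard) →
        c = (G \ T).connectedComponentMk (Sum.inl b₁)) ∧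
      Odd ((G.edgeFinset.card : ℤ) - (Fintype.card (V₁ ⊕ V₂) : ℤ) + 1) :=
  stmt19_general G₁ G₂ T₁ T₂ hT₁ hT₂ ht₁ ht₂ a₁ b₁ a₂ b₂ hab₁ he₁ he₂ hodd₁ hodd₂ huniq₁ huniq₂ G
    hll hrr hlr
end
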